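/- arXiv:2009.00654 — 7 statements merged into one kernel-verified Lean document; each statement's English description precedes it below -/
import Mathlib

section
/- The Diophantine equation k^2 = 4t^4 - 5t^2s^2 + s^4 has no solutions in positive integers t, s, k. -/
/-!
Write k² = (t² - s²)(4t² - s²). Dividing by gcd(t, s), and using that (t, s, k) ↦ (s/2, t, k/2)
preserves the equation when s is even, we may take t, s coprime with s odd. The two factors then
have gcd 1 or 3. In two of the four resulting cases a congruence mod 4 gives a contradiction; in
the other two there are coprime S, T with S² - T² and S² - 4T² both squares. Then S² - (S² - 4T²)
= (2T)² parametrises S = e² + f², T = ef, so S² - T² = e⁴ + e²f² + f⁴ is a square.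

The equation x⁴ + x²y² + y⁴ = z² has no positive coprime solution, by Fermat descent: for x odd and
y = 2Y, the coprime halves P, Q of z ∓ (x² + 2Y²) have product 3Y⁴. Mod 4 forces P = 3a⁴, Q = b⁴,
and then x² = (b² + a²)(b² - 3a²) with coprime factors, which the same parametrisation turns into
a solution with z replaced by b ≤ Q < z.
-/

theorem Int.exists_pos_pow_eq_of_isCoprime_of_mul_eq_pow {a b c : ℤ} {n : ℕ} (hn : Even n)
    (ha : 0 < a) (hab : IsCoprime a b) (h : a * b = c ^ n) : ∃ d, 0 < d ∧ a = d ^ n := by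
  obtain ⟨d, hd⟩ := exists_associated_pow_of_mul_eq_pow' hab h
  rcases Int.associated_iff.mp hd with hd | hd
  · rcases eq_or_ne d 0 with rfl | hd0
    · refine ⟨1, one_pos, ?_⟩
      rw [zero_pow_eq] at hd
      split_ifs at hd with hn0 <;> simp_all
    · exact ⟨|d|, abs_pos.mpr hd0, by rw [hn.pow_abs, hd]⟩
  · nlinarith [hn.pow_nonneg d]

theorem Int.exists_pos_pow_eq_pow_eq_of_isCoprime_of_mul_eq_pow {a b c : ℤ} {n : ℕ}
    (hn : Even n) (ha : 0 < a) (hb : 0 < b) (hab : IsCoprime a b) (h : a * b = c ^ n) :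
    ∃ d e, 0 < d ∧ 0 < e ∧ a = d ^ n ∧ b = e ^ n := by
  obtain ⟨d, hd, rfl⟩ := exists_pos_pow_eq_of_isCoprime_of_mul_eq_pow hn ha hab h
  obtain ⟨e, he, rfl⟩ := exists_pos_pow_eq_of_isCoprime_of_mul_eq_pow hn hb hab.symm
    (by rw [mul_comm, h])
  exact ⟨d, e, hd, he, rfl, rfl⟩

theorem Int.even_sub_of_even_sq_sub_sq {a b : ℤ} (h : Even (a ^ 2 - b ^ 2)) : Even (a - b) := by
  simpa [Int.even_sub, Int.even_pow] using h

theorem Int.sq_emod_four_eq_zero_or_one (b : ℤ) : b ^ 2 % 4 = 0 ∨ b ^ 2 % 4 = 1 := by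
  rcases Int.even_or_odd b with ⟨m, rfl⟩ | hb
  · have : (m + m) ^ 2 = 4 * m ^ 2 := by ring
    omega
  · exact .inr (Int.sq_mod_four_eq_one_of_odd hb)

theorem exists_sq_add_sq_of_sq_sub_sq_eq_four_mul_sq {c d a : ℤ} (hc : 0 < c) (ha : 0 < a)
    (hcd : IsCoprime c d) (h : c ^ 2 - d ^ 2 = 4 * a ^ 2) :
    ∃ e f, 0 < e ∧ 0 < f ∧ IsCoprime e f ∧ c = e ^ 2 + f ^ 2 ∧ a = e * f := by
  obtain ⟨u, hu⟩ := Int.even_sub_of_even_sq_sub_sq ⟨2 * a ^ 2, by rw [h]; ring⟩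
  obtain ⟨v, rfl⟩ : ∃ v, c = u + v := ⟨c - u, by ring⟩
  obtain rfl : d = v - u := by linarith
  have huv : u * v = a ^ 2 := by linarith
  have huv_cop : IsCoprime u v := by
    obtain ⟨α, β, hαβ⟩ := hcd
    exact ⟨α - β, α + β, by linear_combination hαβ⟩
  obtain ⟨hu, hv⟩ : 0 < u ∧ 0 < v := by
    rcases pos_and_pos_or_neg_and_neg_of_mul_pos (huv ▸ pow_pos ha 2) with h' | h'
    · exact h'
    · linarith
  obtain ⟨e, f, he, hf, rfl, rfl⟩ :=
    Int.exists_pos_pow_eq_pow_eq_of_isCoprime_of_mul_eq_pow even_two hu hv huv_cop huv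
  refine ⟨e, f, he, hf, (IsCoprime.pow_iff two_pos two_pos).mp huv_cop, rfl, ?_⟩
  exact (pow_left_inj₀ ha.le (mul_pos he hf).le two_ne_zero).mp (by rw [← huv]; ring)

theorem exists_mul_eq_three_mul_pow_four_of_quartic_eq_sq {x Y z : ℤ} (hY : 0 < Y) (hz : 0 < z)
    (hxY : IsCoprime x Y) (h : x ^ 4 + x ^ 2 * (2 * Y) ^ 2 + (2 * Y) ^ 4 = z ^ 2) :
    ∃ P Q, 0 < P ∧ 0 < Q ∧ Q < z ∧ IsCoprime P Q ∧ P * Q = 3 * Y ^ 4 ∧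
      Q - P = x ^ 2 + 2 * Y ^ 2 := by
  have hzX : z ^ 2 - (x ^ 2 + 2 * Y ^ 2) ^ 2 = 12 * Y ^ 4 := by linear_combination -h
  obtain ⟨P, hP⟩ := Int.even_sub_of_even_sq_sub_sq ⟨6 * Y ^ 4, by rw [hzX]; ring⟩
  obtain ⟨Q, rfl⟩ : ∃ Q, z = P + Q := ⟨z - P, by ring⟩
  have hdiff : Q - P = x ^ 2 + 2 * Y ^ 2 := by linarith
  rw [← hdiff] at hzX
  have hprod : P * Q = 3 * Y ^ 4 := by linarith
  obtain ⟨hP, hQ⟩ : 0 < P ∧ 0 < Q := by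
    rcases pos_and_pos_or_neg_and_neg_of_mul_pos (by rw [hprod]; positivity) with h' | h'
    · exact h'
    · linarith
  refine ⟨P, Q, hP, hQ, by linarith, ?_, hprod, hdiff⟩
  have hdiffY : IsCoprime (Q - P) Y := by
    rw [hdiff, show x ^ 2 + 2 * Y ^ 2 = x ^ 2 + Y * (2 * Y) by ring]
    exact (hxY.pow_left (m := 2)).add_mul_left_left _
  -- a common divisor `d` of `P` and `Q` divides `Q - P`, so is prime to `Y`; then `d ^ 2 ∣ 3`
  refine IsRelPrime.isCoprime fun d hdP hdQ => Int.prime_three.squarefree d ?_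
  have hdY : IsCoprime d Y := hdiffY.of_isCoprime_of_dvd_left (dvd_sub hdQ hdP)
  exact (hdY.mul_left hdY).pow_right.dvd_of_dvd_mul_right (hprod ▸ mul_dvd_mul hdP hdQ)

theorem exists_quartic_eq_sq_of_sq_add_eq {x a b : ℤ} (hx : Odd x) (ha : 0 < a) (hb : 0 < b)
    (hab : IsCoprime a b) (h : x ^ 2 + 2 * a ^ 2 * b ^ 2 = b ^ 4 - 3 * a ^ 4) :
    ∃ e f, 0 < e ∧ 0 < f ∧ IsCoprime e f ∧ e ^ 4 + e ^ 2 * f ^ 2 + f ^ 4 = b ^ 2 := by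
  have hGH : (b ^ 2 + a ^ 2) * (b ^ 2 - 3 * a ^ 2) = x ^ 2 := by linear_combination -h
  have hG : 0 < b ^ 2 + a ^ 2 := by positivity
  have hH : 0 < b ^ 2 - 3 * a ^ 2 :=
    pos_of_mul_pos_right (by rw [hGH]; exact sq_pos_iff.mpr (by rintro rfl; simp at hx)) hG.le
  have hcop : IsCoprime (b ^ 2 + a ^ 2) (b ^ 2 - 3 * a ^ 2) := by
    have hG_odd : Odd (b ^ 2 + a ^ 2) := (Int.odd_mul.mp (hGH ▸ hx.pow)).1
    have h4 : IsCoprime (b ^ 2 + a ^ 2) (2 ^ 2 * a ^ 2) := by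
      refine (Int.isCoprime_two_right.mpr hG_odd).pow_right.mul_right ?_
      simpa using ((IsCoprime.pow_iff two_pos two_pos).mpr hab.symm).add_mul_left_left 1
    obtain ⟨α, β, hαβ⟩ := h4
    exact ⟨α + β, -β, by linear_combination hαβ⟩
  obtain ⟨c, d, hc, hd, hcG, hdH⟩ :=
    Int.exists_pos_pow_eq_pow_eq_of_isCoprime_of_mul_eq_pow even_two hG hH hcop hGH
  rw [hcG, hdH, IsCoprime.pow_iff two_pos two_pos] at hcop
  obtain ⟨e, f, he, hf, hef, rfl, rfl⟩ :=
    exists_sq_add_sq_of_sq_sub_sq_eq_four_mul_sq hc ha hcop (by linarith)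
  exact ⟨e, f, he, hf, hef, by linear_combination -hcG⟩

theorem sq_add_two_mul_sq_mul_sq_add_pow_four_ne {x : ℤ} (hx : Odd x) (a b : ℤ) :
    x ^ 2 + 2 * a ^ 2 * b ^ 2 + a ^ 4 ≠ 3 * b ^ 4 := by
  obtain ⟨i, rfl⟩ := hx
  intro h
  have h4 := congrArg (Int.cast : ℤ → ZMod 4) h
  push_cast at h4
  revert h4
  generalize (i : ZMod 4) = i, (a : ZMod 4) = a, (b : ZMod 4) = b
  revert i a b
  decide

theorem exists_smaller_quartic_eq_sq {x Y z : ℤ} (hx : Odd x) (hY : 0 < Y) (hz : 0 < z)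
    (hxY : IsCoprime x Y) (h : x ^ 4 + x ^ 2 * (2 * Y) ^ 2 + (2 * Y) ^ 4 = z ^ 2) :
    ∃ e f b, 0 < e ∧ 0 < f ∧ 0 < b ∧ b < z ∧ IsCoprime e f ∧
      e ^ 4 + e ^ 2 * f ^ 2 + f ^ 4 = b ^ 2 := by
  obtain ⟨P, Q, hP, hQ, hQz, hPQ, hprod, hdiff⟩ :=
    exists_mul_eq_three_mul_pow_four_of_quartic_eq_sq hY hz hxY h
  have hY_eq {a b : ℤ} (ha : 0 < a) (hb : 0 < b) (hab : a ^ 4 * b ^ 4 = Y ^ 4) : Y = a * b :=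
    (pow_left_inj₀ hY.le (mul_pos ha hb).le four_ne_zero).mp (by rw [← hab]; ring)
  rcases Int.prime_three.dvd_or_dvd (hprod ▸ dvd_mul_right 3 _ : (3 : ℤ) ∣ P * Q)
    with ⟨P', rfl⟩ | ⟨Q', rfl⟩
  · obtain ⟨a, b, ha, hb, rfl, rfl⟩ := Int.exists_pos_pow_eq_pow_eq_of_isCoprime_of_mul_eq_pow
      (c := Y) (n := 4) (by decide) (by linarith) hQ hPQ.of_mul_left_right (by linarith)
    obtain rfl := hY_eq ha hb (by linarith)
    obtain ⟨e, f, he, hf, hef, hb2⟩ := exists_quartic_eq_sq_of_sq_add_eq hx ha hb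
      ((IsCoprime.pow_iff four_pos four_pos).mp hPQ.of_mul_left_right) (by linarith)
    exact ⟨e, f, b, he, hf, hb, (le_self_pow₀ hb four_ne_zero).trans_lt hQz, hef, hb2⟩
  · obtain ⟨a, b, ha, hb, rfl, rfl⟩ := Int.exists_pos_pow_eq_pow_eq_of_isCoprime_of_mul_eq_pow
      (c := Y) (n := 4) (by decide) hP (by linarith) hPQ.of_mul_right_right (by linarith)
    obtain rfl := hY_eq ha hb (by linarith)
    exact absurd (by linarith) (sq_add_two_mul_sq_mul_sq_add_pow_four_ne hx a b)

theorem quartic_ne_sq {x y z : ℤ} (hx : 0 < x) (hy : 0 < y) (hz : 0 < z) (hxy : IsCoprime x y) :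
    x ^ 4 + x ^ 2 * y ^ 2 + y ^ 4 ≠ z ^ 2 := by
  intro h
  rcases Int.even_or_odd x with hx_even | hx_odd <;> rcases Int.even_or_odd y with hy_even | hy_odd
  · have h2y := hxy.of_isCoprime_of_dvd_left (even_iff_two_dvd.mp hx_even)
    exact Int.not_even_iff_odd.mpr (Int.isCoprime_two_left.mp h2y) hy_even
  · obtain ⟨X, rfl⟩ := even_iff_two_dvd.mp hx_even
    obtain ⟨e, f, b, he, hf, hb, hbz, hef, h'⟩ :=
      exists_smaller_quartic_eq_sq hy_odd (by linarith) hz hxy.symm.of_mul_right_right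
        (by linear_combination h)
    exact quartic_ne_sq he hf hb hef h'
  · obtain ⟨Y, rfl⟩ := even_iff_two_dvd.mp hy_even
    obtain ⟨e, f, b, he, hf, hb, hbz, hef, h'⟩ :=
      exists_smaller_quartic_eq_sq hx_odd (by linarith) hz hxy.of_mul_right_right h
    exact quartic_ne_sq he hf hb hef h'
  · have h1 := Int.sq_mod_four_eq_one_of_odd (hx_odd.pow (n := 2))
    have h2 := Int.sq_mod_four_eq_one_of_odd (hx_odd.mul hy_odd)
    have h3 := Int.sq_mod_four_eq_one_of_odd (hy_odd.pow (n := 2))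
    have h4 := Int.sq_emod_four_eq_zero_or_one z
    rw [show x ^ 4 + x ^ 2 * y ^ 2 + y ^ 4 = (x ^ 2) ^ 2 + (x * y) ^ 2 + (y ^ 2) ^ 2 by ring] at h
    omega
termination_by z.toNat
decreasing_by all_goals omega

theorem isCoprime_of_sq_eq_sq_add_four_mul {s m b : ℤ} (hs : Odd s) (hsm : IsCoprime s m)
    (h : b ^ 2 = s ^ 2 + 4 * m) : IsCoprime s b := by
  rw [← IsCoprime.pow_right_iff two_pos, h]
  obtain ⟨α, β, hαβ⟩ := (Int.isCoprime_two_right.mpr hs).pow_right (n := 2) |>.mul_right hsm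
  exact ⟨α - β * s, β, by linear_combination hαβ⟩

theorem gcd_sq_sub_sq_four_mul_sq_sub_sq_dvd_three {t s : ℤ} (h : IsCoprime t s) :
    Int.gcd (t ^ 2 - s ^ 2) (4 * t ^ 2 - s ^ 2) ∣ 3 := by
  obtain ⟨α, β, hαβ⟩ := h.pow (m := 2) (n := 2)
  exact Int.gcd_dvd_iff.mpr ⟨-α - 4 * β, α + β, by linear_combination -3 * hαβ⟩

theorem eq_sq_or_eq_three_mul_sq_of_mul_eq_sq {P Q k : ℤ} (hP : 0 < P) (hQ : 0 < Q)
    (hPQ : Int.gcd P Q ∣ 3) (h : P * Q = k ^ 2) :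
    (∃ a b, 0 < a ∧ 0 < b ∧ P = a ^ 2 ∧ Q = b ^ 2) ∨
      ∃ a b, 0 < a ∧ 0 < b ∧ P = 3 * a ^ 2 ∧ Q = 3 * b ^ 2 := by
  rcases (Nat.dvd_prime Nat.prime_three).mp hPQ with h1 | h3
  · exact .inl (Int.exists_pos_pow_eq_pow_eq_of_isCoprime_of_mul_eq_pow even_two hP hQ
      (Int.isCoprime_iff_gcd_eq_one.mpr h1) h)
  · obtain ⟨A, rfl⟩ : (3 : ℤ) ∣ P := by exact_mod_cast h3 ▸ Int.gcd_dvd_left P Q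
    obtain ⟨B, rfl⟩ : (3 : ℤ) ∣ Q := by exact_mod_cast h3 ▸ Int.gcd_dvd_right _ Q
    have hAB : IsCoprime A B := by
      rw [Int.gcd_mul_left] at h3
      exact Int.isCoprime_iff_gcd_eq_one.mpr (by simpa using h3)
    obtain ⟨κ, rfl⟩ : (3 : ℤ) ∣ k :=
      Int.prime_three.dvd_of_dvd_pow (n := 2) ⟨3 * A * B, by rw [← h]; ring⟩
    obtain ⟨a, b, ha, hb, rfl, rfl⟩ :=
      Int.exists_pos_pow_eq_pow_eq_of_isCoprime_of_mul_eq_pow even_two (by linarith) (by linarith)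
        hAB (by linarith)
    exact .inr ⟨a, b, ha, hb, rfl, rfl⟩

theorem sq_sub_sq_ne_sq_of_sq_sub_four_mul_sq_eq_sq {s t a b : ℤ} (hs : 0 < s) (ht : 0 < t)
    (ha : 0 < a) (hsb : IsCoprime s b) (h : s ^ 2 - 4 * t ^ 2 = b ^ 2) : s ^ 2 - t ^ 2 ≠ a ^ 2 := by
  intro h'
  obtain ⟨e, f, he, hf, hef, rfl, rfl⟩ :=
    exists_sq_add_sq_of_sq_sub_sq_eq_four_mul_sq hs ht hsb (by linarith)
  exact quartic_ne_sq he hf ha hef (by linear_combination h')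

theorem sq_ne_four_mul_pow_four_sub_of_isCoprime_of_odd {t s k : ℤ} (ht : 0 < t) (hs : 0 < s)
    (hk : 0 < k) (hts : IsCoprime t s) (hs_odd : Odd s) :
    k ^ 2 ≠ 4 * t ^ 4 - 5 * t ^ 2 * s ^ 2 + s ^ 4 := by
  intro h
  have hfac : (t ^ 2 - s ^ 2) * (4 * t ^ 2 - s ^ 2) = k ^ 2 := by linear_combination -h
  have hgcd := gcd_sq_sub_sq_four_mul_sq_sub_sq_dvd_three hts
  have hs4 := Int.sq_mod_four_eq_one_of_odd hs_odd
  rcases lt_or_ge s t with hst | hts'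
  · rcases eq_sq_or_eq_three_mul_sq_of_mul_eq_sq (by nlinarith) (by nlinarith) hgcd hfac with
      ⟨-, b, -, -, -, hb⟩ | ⟨a, b, ha, hb, hP, hQ⟩
    · have := Int.sq_emod_four_eq_zero_or_one b
      omega
    · have hsa : IsCoprime s (a ^ 2) := by
        obtain ⟨α, β, hαβ⟩ := hts.symm.pow_right (n := 2)
        exact ⟨α + β * s, 3 * β, by linear_combination hαβ - β * hP⟩
      have hbs : IsCoprime b s := (isCoprime_of_sq_eq_sq_add_four_mul hs_odd hsa (by linarith)).symm
      exact sq_sub_sq_ne_sq_of_sq_sub_four_mul_sq_eq_sq hb ha ht hbs (by linarith) (by linarith)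
  rcases lt_or_ge (2 * t) s with hst | hst
  · have hgcd' : Int.gcd (s ^ 2 - t ^ 2) (s ^ 2 - 4 * t ^ 2) ∣ 3 := by
      rwa [← neg_sub, ← neg_sub (4 * t ^ 2), Int.neg_gcd, Int.gcd_neg]
    rcases eq_sq_or_eq_three_mul_sq_of_mul_eq_sq (by nlinarith) (by nlinarith) hgcd'
      (k := k) (by linear_combination hfac) with ⟨a, b, ha, hb, hP, hQ⟩ | ⟨-, b, -, -, -, hQ⟩
    · refine sq_sub_sq_ne_sq_of_sq_sub_four_mul_sq_eq_sq hs ht ha ?_ hQ hP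
      exact isCoprime_of_sq_eq_sq_add_four_mul hs_odd (hts.symm.pow_right (n := 2)).neg_right
        (by linarith)
    · have := Int.sq_emod_four_eq_zero_or_one b
      omega
  nlinarith [mul_nonneg (by nlinarith : 0 ≤ s ^ 2 - t ^ 2) (by nlinarith : 0 ≤ 4 * t ^ 2 - s ^ 2)]

theorem sq_ne_four_mul_pow_four_sub_of_isCoprime {t s k : ℤ} (ht : 0 < t) (hs : 0 < s)
    (hk : 0 < k) (hts : IsCoprime t s) : k ^ 2 ≠ 4 * t ^ 4 - 5 * t ^ 2 * s ^ 2 + s ^ 4 := by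
  rcases Int.even_or_odd s with hs_even | hs_odd
  · obtain ⟨σ, rfl⟩ := even_iff_two_dvd.mp hs_even
    intro h
    obtain ⟨κ, rfl⟩ : 2 ∣ k := by
      have : Even (k ^ 2) := ⟨2 * t ^ 4 - 10 * t ^ 2 * σ ^ 2 + 8 * σ ^ 4, by rw [h]; ring⟩
      exact even_iff_two_dvd.mp (Int.even_pow.mp this).1
    exact sq_ne_four_mul_pow_four_sub_of_isCoprime_of_odd (by linarith) ht (by linarith)
      hts.of_mul_right_right.symm (Int.isCoprime_two_right.mp hts.of_mul_right_left)
      (by linarith)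
  · exact sq_ne_four_mul_pow_four_sub_of_isCoprime_of_odd ht hs hk hts hs_odd

theorem exists_isCoprime_of_sq_eq_four_mul_pow_four_sub {t s k : ℤ} (ht : 0 < t) (hs : 0 < s)
    (hk : 0 < k) (h : k ^ 2 = 4 * t ^ 4 - 5 * t ^ 2 * s ^ 2 + s ^ 4) :
    ∃ t' s' k' : ℤ, 0 < t' ∧ 0 < s' ∧ 0 < k' ∧ IsCoprime t' s' ∧
      k' ^ 2 = 4 * t' ^ 4 - 5 * t' ^ 2 * s' ^ 2 + s' ^ 4 := by
  obtain ⟨g, t', s', hg, hgcd, rfl, rfl⟩ :=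
    Int.exists_gcd_one' (Int.gcd_pos_of_ne_zero_left s ht.ne')
  have hg : (0 : ℤ) < g := by exact_mod_cast hg
  obtain ⟨κ, rfl⟩ : (g : ℤ) ^ 2 ∣ k := by
    rw [← Int.pow_dvd_pow_iff two_ne_zero]
    exact ⟨4 * t' ^ 4 - 5 * t' ^ 2 * s' ^ 2 + s' ^ 4, by rw [h]; ring⟩
  refine ⟨t', s', κ, pos_of_mul_pos_left ht hg.le, pos_of_mul_pos_left hs hg.le,
    pos_of_mul_pos_right hk (by positivity), Int.isCoprime_iff_gcd_eq_one.mpr hgcd, ?_⟩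
  exact mul_left_cancel₀ (pow_ne_zero 4 hg.ne') (by linear_combination h)

theorem no_solution_quartic :
    ¬ ∃ t s k : ℤ, 0 < t ∧ 0 < s ∧ 0 < k ∧
      k ^ 2 = 4 * t ^ 4 - 5 * t ^ 2 * s ^ 2 + s ^ 4 := by
  rintro ⟨t, s, k, ht, hs, hk, h⟩
  obtain ⟨t, s, k, ht, hs, hk, hts, h⟩ := exists_isCoprime_of_sq_eq_four_mul_pow_four_sub ht hs hk h
  exact sq_ne_four_mul_pow_four_sub_of_isCoprime ht hs hk hts h
end

section
/- If (t, s, k) is a solution in positive integers of k^2 = 4t^4 - 5t^2s^2 + s^4, then (k, ts, |4t^4 - s^4|) is a solution of z^2 = x^4 + 10x^2y^2 + 9y^4. -/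
/-!
With `p = (ts)²`, the quartic `k⁴ + 10k²p + 9p²` factors as `(k² + p)(k² + 9p)`, and the
curve equation turns the two factors into the squares `(2t² - s²)²` and `(2t² + s²)²`, whose
product is `(4t⁴ - s⁴)²`.
-/

section CommRing

variable {R : Type*} [CommRing R]

theorem pow_four_add_ten_mul_add_nine_mul_pow_four (x y : R) :
    x ^ 4 + 10 * x ^ 2 * y ^ 2 + 9 * y ^ 4 = (x ^ 2 + y ^ 2) * (x ^ 2 + 9 * y ^ 2) := by
  ring

theorem sq_four_mul_pow_four_sub_pow_four {t s k : R}
    (h : k ^ 2 = 4 * t ^ 4 - 5 * t ^ 2 * s ^ 2 + s ^ 4) :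
    (4 * t ^ 4 - s ^ 4) ^ 2 = k ^ 4 + 10 * k ^ 2 * (t * s) ^ 2 + 9 * (t * s) ^ 4 := by
  have h₁ : k ^ 2 + (t * s) ^ 2 = (2 * t ^ 2 - s ^ 2) ^ 2 := by linear_combination h
  have h₉ : k ^ 2 + 9 * (t * s) ^ 2 = (2 * t ^ 2 + s ^ 2) ^ 2 := by linear_combination h
  rw [pow_four_add_ten_mul_add_nine_mul_pow_four, h₁, h₉]
  ring

end CommRing

theorem solution_transfer_general (t s k : ℤ)
    (h : k ^ 2 = 4 * t ^ 4 - 5 * t ^ 2 * s ^ 2 + s ^ 4) :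
    (|4 * t ^ 4 - s ^ 4|) ^ 2 = k ^ 4 + 10 * k ^ 2 * (t * s) ^ 2 + 9 * (t * s) ^ 4 := by
  rw [sq_abs]
  exact sq_four_mul_pow_four_sub_pow_four h

theorem solution_transfer (t s k : ℤ) (ht : 0 < t) (hs : 0 < s) (hk : 0 < k)
    (h : k ^ 2 = 4 * t ^ 4 - 5 * t ^ 2 * s ^ 2 + s ^ 4) :
    (|4 * t ^ 4 - s ^ 4|) ^ 2 = k ^ 4 + 10 * k ^ 2 * (t * s) ^ 2 + 9 * (t * s) ^ 4 :=
  solution_transfer_general t s k h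
end

section
/- The Diophantine equation z^2 = x^4 + x^2y^2 + y^4 has no solutions in positive integers x, y, z. -/
/-!
After dividing out `gcd(x, y)` we may take `x, y` coprime and `x` odd; then `y` is even
(otherwise `z² ≡ 3 mod 8`), and `z² + (xy)² = (x² + y²)²` is a primitive Pythagorean triple,
so `xy = 2mn` and `x² + y² = m² + n²` with `m, n` coprime. Such quadruples `(x, y, m, n)`
admit an infinite descent. Writing `x = pq`, `y = 2rs`, `m = pr`, `n = qs`, the relation becomes
`p²(q² - r²) = s²(q² - 4r²)`; coprimality forces `q² - r² = e s²` and `q² - 4r² = e p²` with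
`e ∣ 3`, and congruences modulo 8 leave `e = 1` or `e = -3`. Either way one of `h = q`, `h = p`
is the hypotenuse of two primitive triples with legs `(·, 2t)` and `(·, t)`; parametrizing both
gives a new quadruple whose first two entries have sum of squares `h < x² + y²`.
-/

theorem Nat.sq_mod_eight (n : ℕ) :
    n % 2 = 1 ∧ n ^ 2 % 8 = 1 ∨ n % 2 = 0 ∧ (n ^ 2 % 8 = 0 ∨ n ^ 2 % 8 = 4) := by
  have h8 := Nat.mod_lt n (show 8 > 0 by norm_num)
  rw [Nat.pow_mod, ← Nat.mod_mod_of_dvd n (show 2 ∣ 8 by norm_num)]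
  interval_cases n % 8 <;> simp

theorem Nat.coprime_of_sq_eq_mul_add_pow {z a b c k : ℕ} (hab : a.Coprime b)
    (h : z ^ 2 = a * c + b ^ k) : z.Coprime a := by
  have hz2 : (z ^ 2).Coprime a := by
    rw [h, add_comm, Nat.coprime_add_mul_left_left]
    exact hab.symm.pow_left k
  exact (Nat.coprime_pow_left_iff two_pos z a).mp hz2

theorem Nat.exists_eq_mul_of_mul_eq_mul {a b c d : ℕ} (ha : a ≠ 0) (h : a * b = c * d) :
    ∃ p q r s, a = p * q ∧ c = p * r ∧ d = q * s ∧ b = r * s := by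
  obtain ⟨p, q, ⟨r, rfl⟩, ⟨s, rfl⟩, rfl⟩ := exists_dvd_and_dvd_of_dvd_mul (Dvd.intro b h)
  refine ⟨p, q, r, s, rfl, rfl, rfl, Nat.eq_of_mul_eq_mul_left (Nat.pos_of_ne_zero ha) ?_⟩
  rw [h]
  ring

theorem Nat.exists_coprime_of_sq_add_sq_eq_sq {a b c : ℕ} (h : a ^ 2 + b ^ 2 = c ^ 2)
    (hab : a.Coprime b) (hb : Even b) (hb0 : 0 < b) :
    ∃ m n, 0 < m ∧ 0 < n ∧ m.Coprime n ∧ b = 2 * m * n ∧ c = m ^ 2 + n ^ 2 := by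
  have htriple : PythagoreanTriple (a : ℤ) b c := by
    unfold PythagoreanTriple
    linear_combination (by exact_mod_cast h : (a : ℤ) ^ 2 + b ^ 2 = c ^ 2)
  have ha : Odd a := (hab.coprime_dvd_right hb.two_dvd).odd_of_right
  have hc : (0 : ℤ) < c := by
    have : 0 < c := by nlinarith
    exact_mod_cast this
  obtain ⟨m, n, -, hbmn, hcmn, hmn, -, hm⟩ :=
    htriple.coprime_classification' hab (Int.odd_iff.mp (by exact_mod_cast ha)) hc
  lift m to ℕ using hm
  have hmnZ : (0 : ℤ) < m * n := by linarith [(by exact_mod_cast hb0 : (0 : ℤ) < b)]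
  lift n to ℕ using (pos_of_mul_pos_right hmnZ m.cast_nonneg).le
  have hmn0 : 0 < m * n := by exact_mod_cast hmnZ
  exact ⟨m, n, Nat.pos_of_mul_pos_right hmn0, Nat.pos_of_mul_pos_left hmn0, hmn,
    by exact_mod_cast hbmn, by exact_mod_cast hcmn⟩

structure SqSumTwiceProd (x y m n : ℕ) : Prop where
  pos_left : 0 < x
  pos_right : 0 < y
  sq_add_sq : x ^ 2 + y ^ 2 = m ^ 2 + n ^ 2
  mul_eq : x * y = 2 * (m * n)
  coprime_left : x.Coprime y
  coprime_right : m.Coprime n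

theorem SqSumTwiceProd.symm {x y m n : ℕ} (h : SqSumTwiceProd x y m n) :
    SqSumTwiceProd y x m n :=
  ⟨h.pos_right, h.pos_left, by rw [add_comm, h.sq_add_sq], by rw [mul_comm, h.mul_eq],
    h.coprime_left.symm, h.coprime_right⟩

theorem exists_sqSumTwiceProd_of_common_hypotenuse {a b c t : ℕ} (hb : Odd b)
    (hbt : b.Coprime t) (hct : c.Coprime t) (ht : 0 < t)
    (h₁ : b ^ 2 + (2 * t) ^ 2 = a ^ 2) (h₂ : c ^ 2 + t ^ 2 = a ^ 2) :
    ∃ x y m n, SqSumTwiceProd x y m n ∧ x ^ 2 + y ^ 2 = a := by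
  have hte : Even t := by
    -- an odd `t` would give `a² ≡ 5 (mod 8)`
    have := Nat.sq_mod_eight a
    have := Nat.sq_mod_eight b
    have := Nat.sq_mod_eight t
    rw [Nat.odd_iff] at hb
    rw [Nat.even_iff]
    ring_nf at h₁
    omega
  obtain ⟨x, y, hx, hy, hxy, h2t, hxa⟩ := Nat.exists_coprime_of_sq_add_sq_eq_sq h₁
    (hb.coprime_two_right.mul_right hbt) (even_two_mul t) (by omega)
  obtain ⟨m, n, hm, hn, hmn, htmn, hma⟩ := Nat.exists_coprime_of_sq_add_sq_eq_sq h₂ hct hte ht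
  exact ⟨x, y, m, n, ⟨hx, hy, by omega, by linarith, hxy, hmn⟩, hxa.symm⟩

theorem sq_add_sq_eq_of_sq_mul_add_eq {p q r s : ℕ} (hp : Odd p) (hq : Odd q)
    (hps : p.Coprime s) (hqr : q.Coprime r) (hs : 0 < s)
    (h : (p * q) ^ 2 + (2 * (r * s)) ^ 2 = (p * r) ^ 2 + (q * s) ^ 2) :
    p ^ 2 + (2 * r) ^ 2 = q ^ 2 ∧ s ^ 2 + r ^ 2 = q ^ 2 ∨
      q ^ 2 + (2 * s) ^ 2 = p ^ 2 ∧ r ^ 2 + s ^ 2 = p ^ 2 := by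
  have hZ : (p : ℤ) ^ 2 * (q ^ 2 - r ^ 2) = s ^ 2 * (q ^ 2 - 4 * r ^ 2) := by
    linear_combination (by exact_mod_cast h :
      ((p : ℤ) * q) ^ 2 + (2 * (r * s)) ^ 2 = (p * r) ^ 2 + (q * s) ^ 2)
  obtain ⟨e, he⟩ : (s : ℤ) ^ 2 ∣ q ^ 2 - r ^ 2 :=
    (Nat.isCoprime_iff_coprime.mpr hps.symm).pow.dvd_of_dvd_mul_left ⟨_, hZ⟩
  have he' : (q : ℤ) ^ 2 - 4 * r ^ 2 = p ^ 2 * e := by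
    refine mul_left_cancel₀ (show (s : ℤ) ^ 2 ≠ 0 by positivity) ?_
    linear_combination p ^ 2 * he - hZ
  -- `e` divides both `3 q² = (4 s² - p²) e` and `3 r² = (s² - p²) e`
  have he3 : e ∣ 3 := by
    obtain ⟨u, v, huv⟩ := (Nat.isCoprime_iff_coprime.mpr hqr).pow (m := 2) (n := 2)
    exact ⟨u * (4 * s ^ 2 - p ^ 2) + v * (s ^ 2 - p ^ 2), by
      linear_combination -3 * huv + 4 * u * he - u * he' + v * he - v * he'⟩
  have he_cases : e = 1 ∨ e = -1 ∨ e = 3 ∨ e = -3 := by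
    have := Int.le_of_dvd three_pos he3
    have : -3 ≤ e := neg_le.mp (Int.le_of_dvd three_pos (neg_dvd.mpr he3))
    interval_cases e <;> first | omega | norm_num at he3
  -- `e = -1` and `e = 3` are impossible modulo 8
  have := Nat.sq_mod_eight p
  have := Nat.sq_mod_eight q
  rw [Nat.odd_iff] at hp hq
  obtain rfl | rfl | rfl | rfl := he_cases
  · left
    constructor <;> zify <;> linarith
  · have : q ^ 2 + p ^ 2 = 4 * r ^ 2 := by zify; linear_combination he'
    omega
  · have : q ^ 2 = 4 * r ^ 2 + 3 * p ^ 2 := by zify; linear_combination he'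
    omega
  · right
    constructor <;> zify <;> linarith

theorem SqSumTwiceProd.exists_lt_of_odd {x y m n : ℕ} (h : SqSumTwiceProd x y m n)
    (hx : Odd x) : ∃ a b c d, SqSumTwiceProd a b c d ∧ a ^ 2 + b ^ 2 < x ^ 2 + y ^ 2 := by
  have hlt : ∀ a, a ∣ x → a < x ^ 2 + y ^ 2 := fun a ha =>
    calc a ≤ x := Nat.le_of_dvd h.pos_left ha
      _ ≤ x ^ 2 := Nat.le_self_pow two_ne_zero x
      _ < x ^ 2 + y ^ 2 := Nat.lt_add_of_pos_right (pow_pos h.pos_right 2)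
  obtain ⟨k, rfl⟩ : 2 ∣ y := by
    have : 2 ∣ x * y := ⟨m * n, h.mul_eq⟩
    exact (Nat.Prime.dvd_mul Nat.prime_two).mp this |>.resolve_left
      (by rw [← even_iff_two_dvd, Nat.not_even_iff_odd]; exact hx)
  obtain ⟨p, q, r, s, rfl, rfl, rfl, rfl⟩ :=
    Nat.exists_eq_mul_of_mul_eq_mul hx.pos.ne' (show x * k = m * n by linarith [h.mul_eq])
  obtain ⟨hp, hq⟩ := Nat.odd_mul.mp hx
  have hrs : 0 < r * s := by linarith [h.pos_right]
  have hcop : (p * q).Coprime (r * s) := h.coprime_left.coprime_mul_left_right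
  have hpr : p.Coprime r := hcop.coprime_mul_right.coprime_mul_right_right
  have hps : p.Coprime s := hcop.coprime_mul_right.coprime_mul_left_right
  have hqr : q.Coprime r := hcop.coprime_mul_left.coprime_mul_right_right
  have hqs : q.Coprime s := hcop.coprime_mul_left.coprime_mul_left_right
  have hrs_cop : r.Coprime s := h.coprime_right.coprime_mul_left.coprime_mul_left_right
  rcases sq_add_sq_eq_of_sq_mul_add_eq hp hq hps hqr (Nat.pos_of_mul_pos_left hrs)
    h.sq_add_sq with ⟨h₁, h₂⟩ | ⟨h₁, h₂⟩
  · obtain ⟨a, b, c, d, habcd, hq'⟩ := exists_sqSumTwiceProd_of_common_hypotenuse hp hpr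
      hrs_cop.symm (Nat.pos_of_mul_pos_right hrs) h₁ h₂
    exact ⟨a, b, c, d, habcd, hq' ▸ hlt q (dvd_mul_left q p)⟩
  · obtain ⟨a, b, c, d, habcd, hp'⟩ := exists_sqSumTwiceProd_of_common_hypotenuse hq hqs
      hrs_cop (Nat.pos_of_mul_pos_left hrs) h₁ h₂
    exact ⟨a, b, c, d, habcd, hp' ▸ hlt p (dvd_mul_right p q)⟩

theorem SqSumTwiceProd.exists_lt {x y m n : ℕ} (h : SqSumTwiceProd x y m n) :
    ∃ a b c d, SqSumTwiceProd a b c d ∧ a ^ 2 + b ^ 2 < x ^ 2 + y ^ 2 := by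
  rcases Nat.even_or_odd x with hx | hx
  · obtain ⟨a, b, c, d, habcd, hlt⟩ :=
      h.symm.exists_lt_of_odd (h.coprime_left.coprime_dvd_left hx.two_dvd).odd_of_left
    exact ⟨a, b, c, d, habcd, by rwa [add_comm (x ^ 2)]⟩
  · exact h.exists_lt_of_odd hx

theorem not_sqSumTwiceProd (x y m n : ℕ) : ¬ SqSumTwiceProd x y m n := by
  induction hN : x ^ 2 + y ^ 2 using Nat.strong_induction_on generalizing x y m n with
  | _ N ih =>
    intro h
    obtain ⟨a, b, c, d, habcd, hlt⟩ := h.exists_lt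
    exact ih _ (hN ▸ hlt) a b c d rfl habcd

theorem sq_ne_pow_four_add_of_coprime {x y z : ℕ} (hx : 0 < x) (hy : 0 < y) (hxy : x.Coprime y) :
    z ^ 2 ≠ x ^ 4 + x ^ 2 * y ^ 2 + y ^ 4 := by
  intro h
  wlog hxo : Odd x generalizing x y
  · exact this hy hx hxy.symm (by rw [h]; ring)
      (hxy.coprime_dvd_left (Nat.not_odd_iff_even.mp hxo).two_dvd).odd_of_left
  have hye : Even y := by
    by_contra hyo
    rw [Nat.not_even_iff_odd] at hyo
    -- a sum of three odd squares is `3 (mod 8)`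
    have hz := Nat.sq_mod_eight z
    have h1 := Nat.sq_mod_eight (x ^ 2)
    have h2 := Nat.sq_mod_eight (x * y)
    have h3 := Nat.sq_mod_eight (y ^ 2)
    have o1 := Nat.odd_iff.mp (hxo.pow (n := 2))
    have o2 := Nat.odd_iff.mp (hxo.mul hyo)
    have o3 := Nat.odd_iff.mp (hyo.pow (n := 2))
    rw [show x ^ 4 + x ^ 2 * y ^ 2 + y ^ 4 = (x ^ 2) ^ 2 + (x * y) ^ 2 + (y ^ 2) ^ 2 by ring]
      at h
    omega
  have hpyth : z ^ 2 + (x * y) ^ 2 = (x ^ 2 + y ^ 2) ^ 2 := by rw [h]; ring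
  have hzxy : z.Coprime (x * y) :=
    (Nat.coprime_of_sq_eq_mul_add_pow (c := x ^ 3 + x * y ^ 2) (k := 4) hxy
      (by rw [h]; ring)).mul_right
      (Nat.coprime_of_sq_eq_mul_add_pow (c := y ^ 3 + x ^ 2 * y) (k := 4) hxy.symm
        (by rw [h]; ring))
  obtain ⟨m, n, -, -, hmn, hxymn, hsum⟩ := Nat.exists_coprime_of_sq_add_sq_eq_sq hpyth hzxy
    (hye.mul_left x) (Nat.mul_pos hx hy)
  exact not_sqSumTwiceProd x y m n ⟨hx, hy, hsum, by rw [hxymn]; ring, hxy, hmn⟩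

theorem no_solution_z2_eq_x4_x2y2_y4 :
    ¬ ∃ x y z : ℕ, 0 < x ∧ 0 < y ∧ 0 < z ∧
      z ^ 2 = x ^ 4 + x ^ 2 * y ^ 2 + y ^ 4 := by
  rintro ⟨x, y, z, hx, hy, -, h⟩
  obtain ⟨g, a, b, hg, hab, rfl, rfl⟩ := Nat.exists_coprime' (Nat.gcd_pos_of_pos_left y hx)
  obtain ⟨w, rfl⟩ : g ^ 2 ∣ z := by
    refine (Nat.pow_dvd_pow_iff two_ne_zero).mp ⟨a ^ 4 + a ^ 2 * b ^ 2 + b ^ 4, ?_⟩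
    rw [h]
    ring
  refine sq_ne_pow_four_add_of_coprime (z := w) (Nat.pos_of_mul_pos_right hx)
    (Nat.pos_of_mul_pos_right hy) hab (Nat.eq_of_mul_eq_mul_left (show 0 < g ^ 4 by positivity) ?_)
  linear_combination h
end

section
/- There is no isosceles triangle all of whose side lengths, median lengths, and area are rational. Equivalently: there do not exist positive rationals A, B (legs A, A and base B satisfying the triangle inequality 2A > B) such that the median lengths h = sqrt(A^2 - B^2/4) and l = sqrt(2B^2 + A^2)/2 are both rational. -/
/-!
The slope `r = (2l - A) / B` parametrises the conic `4l² = 2B² + A²`, and in terms of `r` the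
condition on `h` says that `(r² - 1)(r² - 4)` is a nonzero rational square. Writing `r = t / s` in
lowest terms, with `t` odd after possibly replacing `r` by `2 / r`, gives a nontrivial primitive
solution of `(t² - s²)(t² - 4s²) = c²`, and these are ruled out by Fermat descent on `|s|`.

The gcd of the two factors divides `3`. In each case the factors (or their thirds) are, up to a
common sign, squares; one sign leads to `t² + f² = 4e²` with `t` odd, impossible modulo `4`, the
other to a primitive Pythagorean triple `(x, 2mn, m² + n²)` for which
`(m² + mn + n²)(m² - mn + n²)` is a square. Halving the sum and difference of the square roots of
these two coprime factors splits `mn / 2` as a product `PQ` with `P² + Q² = m² + n²`, and the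
factorisation `m = gh`, `P = gp`, `Q = hq` yields the smaller solution `(h, p)`.
-/

theorem Int.sq_add_sq_ne_four_mul_sq {t : ℤ} (ht : Odd t) (f e : ℤ) :
    t ^ 2 + f ^ 2 ≠ 4 * e ^ 2 := by
  obtain ⟨i, rfl⟩ := ht
  rcases Int.even_or_odd' f with ⟨k, rfl | rfl⟩ <;> intro h
  · have : (4 : ℤ) ∣ 1 := ⟨e ^ 2 - i ^ 2 - i - k ^ 2, by linear_combination h⟩
    norm_num at this
  · have : (4 : ℤ) ∣ 2 := ⟨e ^ 2 - i ^ 2 - i - k ^ 2 - k, by linear_combination h⟩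
    norm_num at this

theorem Int.exists_sq_and_sq_of_isCoprime_of_mul_eq_sq {a b c : ℤ} (hab : IsCoprime a b)
    (h : a * b = c ^ 2) (hc : c ≠ 0) :
    ∃ e f : ℤ, a = e ^ 2 ∧ b = f ^ 2 ∨ a = -e ^ 2 ∧ b = -f ^ 2 := by
  obtain ⟨e, he | he⟩ := Int.sq_of_isCoprime hab h <;>
    obtain ⟨f, hf | hf⟩ := Int.sq_of_isCoprime hab.symm (by linear_combination h : b * a = c ^ 2)
  · exact ⟨e, f, .inl ⟨he, hf⟩⟩
  all_goals first
    | exact ⟨e, f, .inr ⟨he, hf⟩⟩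
    | exfalso; subst he hf; nlinarith [sq_nonneg (e * f), sq_pos_of_ne_zero hc]

/-- `(t / s, c / s²)` is a rational point of `y² = (x² - 1)(x² - 4)` with `x, y ≠ 0`. -/
structure QuarticSolution (t s c : ℤ) : Prop where
  odd : Odd t
  isCoprime : IsCoprime t s
  s_ne_zero : s ≠ 0
  c_ne_zero : c ≠ 0
  eq : (t ^ 2 - s ^ 2) * (t ^ 2 - 4 * s ^ 2) = c ^ 2

theorem QuarticSolution.exists_of_sq_add_sq {m j P Q : ℤ} (hm : Odd m) (hPQ : IsCoprime P Q)
    (hj : j ≠ 0) (hsum : m ^ 2 + (2 * j) ^ 2 = P ^ 2 + Q ^ 2) (hprod : m * j = P * Q) :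
    ∃ t s c, QuarticSolution t s c ∧ s.natAbs ≤ (m * j).natAbs := by
  obtain ⟨g, h, ⟨p, rfl⟩, ⟨q, rfl⟩, rfl⟩ :=
    exists_dvd_and_dvd_of_dvd_mul (Dvd.intro j hprod : m ∣ P * Q)
  have hgh : g * h ≠ 0 := by rintro h0; simp [h0] at hm
  obtain rfl : j = p * q := mul_left_cancel₀ hgh (by linear_combination hprod)
  obtain ⟨hp, hq⟩ := mul_ne_zero_iff.mp hj
  have hg := left_ne_zero_of_mul hgh
  have key : g ^ 2 * (h ^ 2 - p ^ 2) = q ^ 2 * (h ^ 2 - 4 * p ^ 2) := by linear_combination hsum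
  -- multiplying the two sides of `key` shows `(g q)² ∣ (g² (h² - p²))²`
  obtain ⟨c, hc⟩ : g * q ∣ g ^ 2 * (h ^ 2 - p ^ 2) :=
    (Int.pow_dvd_pow_iff two_ne_zero).mp
      ⟨(h ^ 2 - p ^ 2) * (h ^ 2 - 4 * p ^ 2), by linear_combination (g ^ 2 * (h ^ 2 - p ^ 2)) * key⟩
  refine ⟨h, p, c, ⟨Int.Odd.of_mul_right hm, hPQ.of_mul_left_right.of_mul_right_left.symm, hp,
    ?_, ?_⟩, ?_⟩
  · rintro rfl
    have hhp : h ^ 2 = p ^ 2 := by simpa [hg, sub_eq_zero] using hc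
    have : 3 * (q * p) ^ 2 = 0 := by linear_combination key - (g ^ 2 - q ^ 2) * hhp
    simp [hp, hq] at this
  · apply mul_left_cancel₀ (pow_ne_zero 2 (mul_ne_zero hg hq))
    linear_combination (g ^ 2 * (h ^ 2 - p ^ 2) + g * q * c) * hc - g ^ 2 * (h ^ 2 - p ^ 2) * key
  · exact Int.natAbs_le_of_dvd_ne_zero ⟨g * h * q, by ring⟩ (mul_ne_zero hgh hj)

theorem isCoprime_sq_add_mul_add_sq {m n : ℤ} (h : IsCoprime m n)
    (hodd : Odd (m ^ 2 + m * n + n ^ 2)) :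
    IsCoprime (m ^ 2 + m * n + n ^ 2) (m ^ 2 - m * n + n ^ 2) := by
  have hm : IsCoprime (n ^ 2 + m * (m + n)) m := h.symm.pow_left.add_mul_left_left _
  have hn : IsCoprime (m ^ 2 + n * (m + n)) n := h.pow_left.add_mul_left_left _
  have h2mn : IsCoprime (m ^ 2 + m * n + n ^ 2) (2 * (m * n)) := by
    refine (Int.isCoprime_two_right.mpr hodd).mul_right (IsCoprime.mul_right ?_ ?_)
    · convert hm using 1; ring
    · convert hn using 1; ring
  have := h2mn.neg_right.add_mul_left_right 1
  rwa [show -(2 * (m * n)) + (m ^ 2 + m * n + n ^ 2) * 1 = m ^ 2 - m * n + n ^ 2 by ring] at this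

theorem QuarticSolution.exists_of_mul_eq_sq {m n q : ℤ} (hmn : IsCoprime m n) (hm : Odd m)
    (hn : Even n) (hn0 : n ≠ 0)
    (hq : (m ^ 2 + m * n + n ^ 2) * (m ^ 2 - m * n + n ^ 2) = q ^ 2) :
    ∃ t s c, QuarticSolution t s c ∧ s.natAbs < (m * n).natAbs := by
  have hm0 : m ≠ 0 := by rintro rfl; simp at hm
  have hApos : 0 < m ^ 2 + m * n + n ^ 2 := by
    nlinarith [sq_nonneg (m + n), sq_pos_of_ne_zero hm0]
  have hBpos : 0 < m ^ 2 - m * n + n ^ 2 := by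
    nlinarith [sq_nonneg (m - n), sq_pos_of_ne_zero hm0]
  have hAodd : Odd (m ^ 2 + m * n + n ^ 2) :=
    (hm.pow.add_even (hn.mul_left m)).add_even (hn.pow_of_ne_zero two_ne_zero)
  have hBodd : Odd (m ^ 2 - m * n + n ^ 2) :=
    (hm.pow.sub_even (hn.mul_left m)).add_even (hn.pow_of_ne_zero two_ne_zero)
  have hAB := isCoprime_sq_add_mul_add_sq hmn hAodd
  have hq0 : q ≠ 0 := by rintro rfl; nlinarith
  obtain ⟨a, b, ⟨ha, hb⟩ | ⟨ha, -⟩⟩ := Int.exists_sq_and_sq_of_isCoprime_of_mul_eq_sq hAB hq hq0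
  swap
  · nlinarith [sq_nonneg a]
  have hab : IsCoprime a b := by rwa [← IsCoprime.pow_iff two_pos two_pos, ← ha, ← hb]
  obtain ⟨α, rfl⟩ := (Int.odd_pow' two_ne_zero).mp (ha ▸ hAodd)
  obtain ⟨β, rfl⟩ := (Int.odd_pow' two_ne_zero).mp (hb ▸ hBodd)
  -- `α + β + 1 = (a + b) / 2` and `α - β = (a - b) / 2`
  have hPQ : IsCoprime (α + β + 1) (α - β) := by
    obtain ⟨u, v, huv⟩ := hab
    exact ⟨u + v, u - v, by linear_combination huv⟩
  obtain ⟨j, rfl⟩ := hn.two_dvd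
  have hj : j ≠ 0 := right_ne_zero_of_mul hn0
  obtain ⟨t, s, c, hsol, hs⟩ :=
    QuarticSolution.exists_of_sq_add_sq hm hPQ hj (by linarith) (by linarith)
  refine ⟨t, s, c, hsol, hs.trans_lt ?_⟩
  have hmj : 0 < (m * j).natAbs := Int.natAbs_pos.mpr (mul_ne_zero hm0 hj)
  rw [mul_left_comm, Int.natAbs_mul 2 (m * j)]
  change _ < 2 * _
  omega

theorem QuarticSolution.exists_of_pythagorean {x y z q : ℤ} (hx : Odd x) (hxy : IsCoprime x y)
    (hy : y ≠ 0) (hxyz : x ^ 2 + (2 * y) ^ 2 = z ^ 2) (hq : z ^ 2 - y ^ 2 = q ^ 2) :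
    ∃ t s c, QuarticSolution t s c ∧ s.natAbs < y.natAbs := by
  have hgcd : Int.gcd x (2 * y) = 1 :=
    Int.isCoprime_iff_gcd_eq_one.mp ((Int.isCoprime_two_right.mpr hx).mul_right hxy)
  have htriple : PythagoreanTriple x (2 * y) z := by
    unfold PythagoreanTriple; linear_combination hxyz
  obtain ⟨m, n, ⟨-, hy2⟩ | ⟨hx2, -⟩, hz, hmn, hpar⟩ :=
    PythagoreanTriple.coprime_classification.mp ⟨htriple, hgcd⟩
  swap
  · exact absurd hx (Int.not_odd_iff_even.mpr ⟨m * n, by rw [hx2]; ring⟩)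
  obtain rfl : y = m * n := by linarith
  have hq' : (m ^ 2 + m * n + n ^ 2) * (m ^ 2 - m * n + n ^ 2) = q ^ 2 := by
    rcases hz with rfl | rfl <;> linear_combination hq
  have hmn' := Int.isCoprime_iff_gcd_eq_one.mpr hmn
  rcases hpar with ⟨hm, hn⟩ | ⟨hm, hn⟩
  · rw [mul_comm m n]
    exact QuarticSolution.exists_of_mul_eq_sq (q := q) hmn'.symm (Int.odd_iff.mpr hn)
      (Int.even_iff.mpr hm) (left_ne_zero_of_mul hy) (by linear_combination hq')
  · exact QuarticSolution.exists_of_mul_eq_sq hmn' (Int.odd_iff.mpr hm) (Int.even_iff.mpr hn)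
      (right_ne_zero_of_mul hy) hq'

theorem isCoprime_sq_sub_sq_or_three_dvd {t s : ℤ} (h : IsCoprime t s) :
    IsCoprime (t ^ 2 - s ^ 2) (t ^ 2 - 4 * s ^ 2) ∨ 3 ∣ t ^ 2 - s ^ 2 := by
  refine or_iff_not_imp_right.mpr fun h3 => ?_
  obtain ⟨u, v, huv⟩ := h.pow (m := 2) (n := 2)
  obtain ⟨a, b, hab⟩ := (Prime.coprime_iff_not_dvd Int.prime_three).mpr h3
  exact ⟨a * (4 * u + v) + b, -(a * (u + v)), by linear_combination 3 * a * huv + hab⟩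

theorem QuarticSolution.exists_natAbs_lt_of_isCoprime {t s c : ℤ} (h : QuarticSolution t s c)
    (hcop : IsCoprime (t ^ 2 - s ^ 2) (t ^ 2 - 4 * s ^ 2)) :
    ∃ t' s' c', QuarticSolution t' s' c' ∧ s'.natAbs < s.natAbs := by
  obtain ⟨e, f, ⟨he, hf⟩ | ⟨-, hf⟩⟩ :=
    Int.exists_sq_and_sq_of_isCoprime_of_mul_eq_sq hcop h.eq h.c_ne_zero
  · have hf_odd : Odd f :=
      (Int.odd_pow' two_ne_zero).mp (hf ▸ h.odd.pow.sub_even ⟨2 * s ^ 2, by ring⟩)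
    have hfs : IsCoprime f s := by
      have := (h.isCoprime.pow (m := 2) (n := 2)).add_mul_left_left (-4)
      rwa [show t ^ 2 + s ^ 2 * -4 = f ^ 2 by linear_combination hf,
        IsCoprime.pow_iff two_pos two_pos] at this
    exact exists_of_pythagorean (z := t) (q := e) hf_odd hfs h.s_ne_zero
      (by linear_combination -hf) (by linear_combination he)
  · exact absurd (by linear_combination hf) (Int.sq_add_sq_ne_four_mul_sq h.odd f s)

theorem QuarticSolution.exists_natAbs_lt_of_three_dvd {t s c : ℤ} (h : QuarticSolution t s c)
    (h3 : 3 ∣ t ^ 2 - s ^ 2) :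
    ∃ t' s' c', QuarticSolution t' s' c' ∧ s'.natAbs < s.natAbs := by
  obtain ⟨X, hX⟩ := h3
  obtain ⟨u, v, huv⟩ := h.isCoprime.pow (m := 2) (n := 2)
  obtain ⟨d, rfl⟩ : 3 ∣ c := Int.prime_three.dvd_of_dvd_pow (n := 2)
    ⟨3 * (X * (X - s ^ 2)), by linear_combination -h.eq + (t ^ 2 - 4 * s ^ 2 + 3 * X) * hX⟩
  have heq : X * (X - s ^ 2) = d ^ 2 := by
    apply mul_left_cancel₀ (by norm_num : (9 : ℤ) ≠ 0)
    linear_combination h.eq - (t ^ 2 - 4 * s ^ 2 + 3 * X) * hX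
  have hcop : IsCoprime X (X - s ^ 2) :=
    ⟨4 * u + v, -(u + v), by linear_combination huv - u * hX⟩
  obtain ⟨e, f, ⟨he, hf⟩ | ⟨he, hf⟩⟩ :=
    Int.exists_sq_and_sq_of_isCoprime_of_mul_eq_sq hcop heq (right_ne_zero_of_mul h.c_ne_zero)
  · exact absurd (by linear_combination hX - hf + 4 * he) (Int.sq_add_sq_ne_four_mul_sq h.odd f e)
  have he0 : e ≠ 0 := by
    rintro rfl
    have : d ^ 2 = 0 := by linear_combination -heq + (X - s ^ 2) * he
    exact h.c_ne_zero (by simpa using this)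
  have hte : IsCoprime t e := by
    rw [← IsCoprime.pow_iff two_pos two_pos]
    exact ⟨u + v, 3 * v, by linear_combination huv + v * hX + 3 * v * he⟩
  obtain ⟨t', s', c', hsol, hlt⟩ := exists_of_pythagorean (z := f) (q := s) h.odd hte he0
    (by linear_combination hX + 4 * he - hf) (by linear_combination hf - he)
  refine ⟨t', s', c', hsol, hlt.trans (Int.natAbs_lt_iff_sq_lt.mpr ?_)⟩
  have ht0 : t ≠ 0 := by rintro rfl; simpa using h.odd
  linarith [sq_pos_of_ne_zero ht0, sq_nonneg e]

theorem QuarticSolution.exists_natAbs_lt {t s c : ℤ} (h : QuarticSolution t s c) :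
    ∃ t' s' c', QuarticSolution t' s' c' ∧ s'.natAbs < s.natAbs :=
  (isCoprime_sq_sub_sq_or_three_dvd h.isCoprime).elim h.exists_natAbs_lt_of_isCoprime
    h.exists_natAbs_lt_of_three_dvd

theorem not_quarticSolution (t s c : ℤ) : ¬ QuarticSolution t s c := by
  induction hn : s.natAbs using Nat.strong_induction_on generalizing t s c with
  | _ n ih =>
    intro h
    obtain ⟨t', s', c', h', hlt⟩ := h.exists_natAbs_lt
    exact ih _ (hn ▸ hlt) t' s' c' rfl h'

theorem quartic_div_ne_sq_of_odd {t s : ℤ} (ht : Odd t) (hts : IsCoprime t s) (hs : s ≠ 0)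
    {y : ℚ} (hy : y ≠ 0) : (((t : ℚ) / s) ^ 2 - 1) * ((t / s) ^ 2 - 4) ≠ y ^ 2 := by
  intro h
  have hs' : (s : ℚ) ≠ 0 := Int.cast_ne_zero.mpr hs
  have hN : (((t ^ 2 - s ^ 2) * (t ^ 2 - 4 * s ^ 2) : ℤ) : ℚ) = (y * s ^ 2) ^ 2 := by
    field_simp at h
    push_cast
    linear_combination h
  obtain ⟨c, hc⟩ := Rat.isSquare_intCast_iff.mp ⟨y * s ^ 2, by rw [hN]; ring⟩
  refine not_quarticSolution t s c ⟨ht, hts, hs, ?_, by rw [hc]; ring⟩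
  rintro rfl
  exact pow_ne_zero 2 (mul_ne_zero hy (pow_ne_zero 2 hs')) (by rw [← hN, hc]; simp)

theorem quartic_ne_sq_s5 {r y : ℚ} (hr : r ≠ 0) (hy : y ≠ 0) :
    (r ^ 2 - 1) * (r ^ 2 - 4) ≠ y ^ 2 := by
  have hcop : IsCoprime r.num r.den := Int.isCoprime_iff_gcd_eq_one.mpr r.reduced
  rcases Int.even_or_odd r.num with hev | hodd
  · -- `r ↦ 2 / r` preserves the curve and makes the numerator odd
    obtain ⟨k, hk⟩ := hev.two_dvd
    rw [hk] at hcop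
    have hk0 : k ≠ 0 := by rintro rfl; simp [hr] at hk
    have h2r : ((r.den : ℤ) : ℚ) / k = 2 / r := by
      have hnum : r * r.den = 2 * k := by rw [Rat.mul_den_eq_num, hk]; push_cast; ring
      field_simp
      linear_combination hnum
    intro h
    refine quartic_div_ne_sq_of_odd (Int.isCoprime_two_left.mp hcop.of_mul_left_left)
      hcop.of_mul_left_right.symm hk0 (y := 2 * y / r ^ 2) (by positivity) ?_
    rw [h2r]
    field_simp
    linear_combination 4 * h
  · rw [← Rat.num_div_den r]
    exact quartic_div_ne_sq_of_odd hodd hcop (by simp) hy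

theorem no_perfect_isosceles_triangle :
    ¬ ∃ A B h l : ℚ, 0 < A ∧ 0 < B ∧ B < 2 * A ∧ 0 ≤ h ∧ 0 ≤ l ∧
      h ^ 2 = A ^ 2 - B ^ 2 / 4 ∧ 4 * l ^ 2 = 2 * B ^ 2 + A ^ 2 := by
  rintro ⟨A, B, h, l, hA, hB, hBA, -, -, hh, hl⟩
  have hr : 2 * l - A ≠ 0 := fun h0 => by nlinarith
  have hh0 : h ≠ 0 := by rintro rfl; nlinarith
  refine quartic_ne_sq_s5 (r := (2 * l - A) / B) (y := 2 * h * (2 * l - A) / B ^ 2)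
    (div_ne_zero hr hB.ne') (by positivity) ?_
  field_simp
  linear_combination (-4 * (2 * l - A) ^ 2) * hh +
    ((2 * l - A) ^ 2 - 2 * A * (2 * l - A) - 2 * B ^ 2) * hl
end

section
/- If a, b, c, d are positive integers with gcd(a, b) = 1, gcd(c, d) = 1, and (a^2 + 4b^2)c^2 = (a^2 + 3b^2)d^2, then a^2 + 4b^2 = d^2 and a^2 + 3b^2 = c^2. -/
/-!
Since `a² + 4b²` and `a² + 3b²` differ by `b²`, any common divisor divides `b²` and then `a²`,
so the two are coprime. In a relation `A * x = B * y` between two coprime pairs each factor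
must divide, and so equal, its partner on the other side.
-/

namespace Nat

theorem coprime_add_succ_mul_add_mul {x y : ℕ} (hxy : Coprime x y) (k : ℕ) :
    Coprime (x + (k + 1) * y) (x + k * y) := by
  rw [add_mul, one_mul, ← add_assoc, add_comm, coprime_add_self_left,
    coprime_add_mul_right_right]
  exact hxy.symm

theorem Coprime.eq_and_eq_of_mul_eq_mul {A B x y : ℕ} (hAB : Coprime A B) (hxy : Coprime x y)
    (h : A * x = B * y) : A = y ∧ B = x := by
  have hA_dvd_y : A ∣ y := hAB.dvd_of_dvd_mul_left ⟨x, h.symm⟩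
  have hy_dvd_A : y ∣ A := hxy.symm.dvd_of_dvd_mul_right ⟨B, by rw [h, mul_comm]⟩
  have hB_dvd_x : B ∣ x := hAB.symm.dvd_of_dvd_mul_left ⟨y, h⟩
  have hx_dvd_B : x ∣ B := hxy.dvd_of_dvd_mul_right ⟨A, by rw [← h, mul_comm]⟩
  exact ⟨dvd_antisymm hA_dvd_y hy_dvd_A, dvd_antisymm hB_dvd_x hx_dvd_B⟩

end Nat

theorem split_equation_general (a b c d : ℕ)
    (hab : Nat.Coprime a b) (hcd : Nat.Coprime c d)
    (h : (a ^ 2 + 4 * b ^ 2) * c ^ 2 = (a ^ 2 + 3 * b ^ 2) * d ^ 2) :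
    a ^ 2 + 4 * b ^ 2 = d ^ 2 ∧ a ^ 2 + 3 * b ^ 2 = c ^ 2 :=
  (Nat.coprime_add_succ_mul_add_mul (hab.pow 2 2) 3).eq_and_eq_of_mul_eq_mul (hcd.pow 2 2) h

theorem split_equation (a b c d : ℕ) (ha : 0 < a) (hb : 0 < b) (hc : 0 < c) (hd : 0 < d)
    (hab : Nat.Coprime a b) (hcd : Nat.Coprime c d)
    (h : (a ^ 2 + 4 * b ^ 2) * c ^ 2 = (a ^ 2 + 3 * b ^ 2) * d ^ 2) :
    a ^ 2 + 4 * b ^ 2 = d ^ 2 ∧ a ^ 2 + 3 * b ^ 2 = c ^ 2 :=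
  split_equation_general a b c d hab hcd h
end

section
/- The equation c^2 = a^2 + 3b^2 has no solution in positive integers a, b, c with gcd(a, b) = 1, a odd, b odd, together with d^2 = a^2 + 4b^2 for some positive integer d; i.e., there are no positive integers a, b, c, d with gcd(a,b)=1 such that a^2 + 3b^2 = c^2 and a^2 + 4b^2 = d^2. -/
/-!
Infinite descent on `d`. In a primitive solution `a` is odd and `b = 2B`, and the parametrisation
of `a² + 12B² = c²` gives `B = rs`, `a = ±(s² - 3r²)`, so `d² = (s² + r²)(s² + 9r²)` with coprime
factors `e²` and `f²`. Parametrising `e² + 8r² = f²` in the same way gives `r = uv`,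
`f = v² + 2u²`, `e = ±(v² - 2u²)`, whence `s² = (v² - u²)(v² - 4u²)`. The two factors are coprime
up to a common factor `3`; splitting them (or their thirds) into squares either gives a new
primitive solution with `d'² < f ≤ d` or is impossible modulo `4`.
-/

theorem Int.sq_emod_eight (x : ℤ) :
    x % 2 = 1 ∧ x ^ 2 % 8 = 1 ∨ x % 2 = 0 ∧ (x ^ 2 % 8 = 0 ∨ x ^ 2 % 8 = 4) := by
  have h8 : x % 8 = 0 ∨ x % 8 = 1 ∨ x % 8 = 2 ∨ x % 8 = 3 ∨ x % 8 = 4 ∨ x % 8 = 5 ∨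
      x % 8 = 6 ∨ x % 8 = 7 := by omega
  rcases h8 with h | h | h | h | h | h | h | h <;>
    simp [pow_two, Int.mul_emod, h] <;> omega

theorem Int.exists_sq_or_neg_sq_of_mul_eq_sq {x y s : ℤ} (hxy : IsCoprime x y)
    (h : x * y = s ^ 2) (hs : s ≠ 0) :
    ∃ g k : ℤ, 0 < g ∧ 0 < k ∧ (x = g ^ 2 ∧ y = k ^ 2 ∨ x = -g ^ 2 ∧ y = -k ^ 2) := by
  obtain ⟨g, hg⟩ := Int.sq_of_isCoprime hxy h
  obtain ⟨k, hk⟩ := Int.sq_of_isCoprime hxy.symm (by rw [mul_comm, h])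
  have hs2 : 0 < s ^ 2 := by positivity
  have hg0 : g ≠ 0 := by rintro rfl; rcases hg with rfl | rfl <;> simp at h <;> omega
  have hk0 : k ≠ 0 := by rintro rfl; rcases hk with rfl | rfl <;> simp at h <;> omega
  refine ⟨|g|, |k|, abs_pos.2 hg0, abs_pos.2 hk0, ?_⟩
  simp only [sq_abs]
  have hgk := mul_nonneg (sq_nonneg g) (sq_nonneg k)
  rcases hg with rfl | rfl <;> rcases hk with rfl | rfl
  · exact .inl ⟨rfl, rfl⟩
  · nlinarith
  · nlinarith
  · exact .inr ⟨rfl, rfl⟩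

theorem Int.exists_sq_of_mul_eq_sq {x y s : ℤ} (hx : 0 < x) (hy : 0 < y) (hxy : IsCoprime x y)
    (h : x * y = s ^ 2) : ∃ g k : ℤ, 0 < g ∧ 0 < k ∧ x = g ^ 2 ∧ y = k ^ 2 := by
  have hs : s ≠ 0 := by rintro rfl; nlinarith
  obtain ⟨g, k, hg, hk, ⟨rfl, rfl⟩ | ⟨rfl, -⟩⟩ := Int.exists_sq_or_neg_sq_of_mul_eq_sq hxy h hs
  · exact ⟨g, k, hg, hk, rfl, rfl⟩
  · nlinarith

theorem Int.exists_of_mul_eq_prime_mul_sq {m p q y : ℤ} (hm : Prime m) (hp : 0 < p) (hq : 0 < q)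
    (hpq : IsCoprime p q) (h : p * q = m * y ^ 2) :
    ∃ r s : ℤ, 0 < r ∧ 0 < s ∧ IsCoprime r s ∧
      (p = m * r ^ 2 ∧ q = s ^ 2 ∨ p = s ^ 2 ∧ q = m * r ^ 2) := by
  wlog hmp : m ∣ p generalizing p q
  · have hmq : m ∣ q := (hm.dvd_or_dvd ⟨y ^ 2, h⟩).resolve_left hmp
    obtain ⟨r, s, hr, hs, hrs, hpq'⟩ := this hq hp hpq.symm (by rw [mul_comm, h]) hmq
    exact ⟨r, s, hr, hs, hrs, by tauto⟩
  obtain ⟨p', rfl⟩ := hmp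
  have hp'q : p' * q = y ^ 2 := mul_left_cancel₀ hm.ne_zero (by rw [← mul_assoc, h])
  have hp' : 0 < p' := by
    rcases lt_trichotomy p' 0 with hneg | rfl | hpos
    · nlinarith
    · simp at hp
    · exact hpos
  obtain ⟨r, s, hr, hs, rfl, rfl⟩ :=
    Int.exists_sq_of_mul_eq_sq hp' hq (hpq.of_isCoprime_of_dvd_left (dvd_mul_left p' m)) hp'q
  refine ⟨r, s, hr, hs, ?_, .inl ⟨rfl, rfl⟩⟩
  exact (IsCoprime.pow_iff two_pos two_pos).mp (hpq.of_isCoprime_of_dvd_left (dvd_mul_left _ m))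

theorem Int.exists_of_sq_add_four_mul_prime_mul_sq_eq_sq {m x y z : ℤ} (hm : Prime m)
    (hm0 : 0 < m) (hx : x % 2 = 1) (hy : 0 < y) (hz : 0 < z) (hxz : IsCoprime x z)
    (h : x ^ 2 + 4 * m * y ^ 2 = z ^ 2) :
    ∃ r s : ℤ, 0 < r ∧ 0 < s ∧ IsCoprime r s ∧ y = r * s ∧ z = s ^ 2 + m * r ^ 2 ∧
      x ^ 2 = (s ^ 2 - m * r ^ 2) ^ 2 := by
  have hxz' : -z < x ∧ x < z :=
    abs_lt_of_sq_lt_sq' (by nlinarith [mul_pos hm0 (pow_pos hy 2)]) hz.le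
  have hz2 : z % 2 = 1 := by
    have := Int.sq_emod_eight x; have := Int.sq_emod_eight z
    have : z ^ 2 = x ^ 2 + 4 * (m * y ^ 2) := by linear_combination -h
    omega
  obtain ⟨p, q, rfl, rfl⟩ : ∃ p q, z = p + q ∧ x = p - q :=
    ⟨(z + x) / 2, (z - x) / 2, by omega, by omega⟩
  have hpq : p * q = m * y ^ 2 := mul_left_cancel₀ four_ne_zero (by linear_combination -h)
  have hpq' : IsCoprime p q := by
    obtain ⟨α, β, hαβ⟩ := hxz
    exact ⟨α + β, β - α, by linear_combination hαβ⟩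
  obtain ⟨r, s, hr, hs, hrs, hcase⟩ :=
    Int.exists_of_mul_eq_prime_mul_sq hm (by omega) (by omega) hpq' hpq
  have hy2 : y ^ 2 = (r * s) ^ 2 := by
    refine mul_left_cancel₀ hm.ne_zero ?_
    rcases hcase with ⟨rfl, rfl⟩ | ⟨rfl, rfl⟩ <;> linear_combination -hpq
  refine ⟨r, s, hr, hs, hrs, (pow_left_inj₀ hy.le (by positivity) two_ne_zero).mp hy2, ?_⟩
  rcases hcase with ⟨rfl, rfl⟩ | ⟨rfl, rfl⟩ <;> constructor <;> ring

theorem Int.isCoprime_of_sq_add_three_mul_sq_eq_sq {a b c : ℤ} (hab : IsCoprime a b)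
    (h : a ^ 2 + 3 * b ^ 2 = c ^ 2) : IsCoprime a c := by
  have h3a : ¬ 3 ∣ a := by
    rintro ⟨a', rfl⟩
    obtain ⟨c', rfl⟩ : 3 ∣ c :=
      Int.prime_three.dvd_of_dvd_pow (n := 2) ⟨3 * a' ^ 2 + b ^ 2, by linear_combination -h⟩
    have h3b : 3 ∣ b := Int.prime_three.dvd_of_dvd_pow (n := 2)
      ⟨c' ^ 2 - a' ^ 2, mul_left_cancel₀ three_ne_zero (by linear_combination h)⟩
    exact Int.prime_three.not_isUnit (hab.isUnit_of_dvd' (dvd_mul_right 3 a') h3b)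
  have hac2 : IsCoprime a (3 * b ^ 2 + a * a) :=
    ((Int.prime_three.coprime_iff_not_dvd.2 h3a).symm.mul_right hab.pow_right).add_mul_left_right a
  rw [show 3 * b ^ 2 + a * a = c ^ 2 by linear_combination h] at hac2
  exact (IsCoprime.pow_right_iff two_pos).mp hac2

structure IsPrimitiveSolution (a b c d : ℤ) : Prop where
  a_pos : 0 < a
  b_pos : 0 < b
  c_pos : 0 < c
  d_pos : 0 < d
  isCoprime : IsCoprime a b
  sq_add_three_mul_sq : a ^ 2 + 3 * b ^ 2 = c ^ 2
  sq_add_four_mul_sq : a ^ 2 + 4 * b ^ 2 = d ^ 2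

theorem IsPrimitiveSolution.parity {a b c d : ℤ} (h : IsPrimitiveSolution a b c d) :
    a % 2 = 1 ∧ b % 2 = 0 := by
  have h2 : ¬ (2 ∣ a ∧ 2 ∣ b) := fun ⟨ha, hb⟩ ↦
    Int.prime_two.not_isUnit (h.isCoprime.isUnit_of_dvd' ha hb)
  have := h.sq_add_three_mul_sq; have := h.sq_add_four_mul_sq
  have := Int.sq_emod_eight a; have := Int.sq_emod_eight b
  have := Int.sq_emod_eight c; have := Int.sq_emod_eight d
  omega

theorem exists_of_sq_add_sq_mul_sq_add_nine_mul_sq_eq_sq {r s d : ℤ} (hr : 0 < r) (hd : 0 < d)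
    (hrs : IsCoprime r s) (hrs2 : (r + s) % 2 = 1)
    (h : (s ^ 2 + r ^ 2) * (s ^ 2 + 9 * r ^ 2) = d ^ 2) :
    ∃ u v : ℤ, 0 < u ∧ 0 < v ∧ IsCoprime u v ∧ v % 2 = 1 ∧ v ^ 2 + 2 * u ^ 2 ≤ d ∧
      (v ^ 2 - u ^ 2) * (v ^ 2 - 4 * u ^ 2) = s ^ 2 := by
  have hodd : (s ^ 2 + r ^ 2) % 2 = 1 := by
    have := Int.sq_emod_eight r; have := Int.sq_emod_eight s; omega
  have hcop : IsCoprime (s ^ 2 + r ^ 2) (s ^ 2 + 9 * r ^ 2) := by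
    have h2 : IsCoprime (s ^ 2 + r ^ 2) (2 ^ 3) :=
      (Int.prime_two.coprime_iff_not_dvd.2 (by omega)).symm.pow_right
    have hr2 : IsCoprime (s ^ 2 + r ^ 2) (r ^ 2) := by
      simpa using ((IsCoprime.pow_iff two_pos two_pos).2 hrs).add_mul_left_right 1 |>.symm
    rw [show s ^ 2 + 9 * r ^ 2 = 2 ^ 3 * r ^ 2 + (s ^ 2 + r ^ 2) * 1 by ring]
    exact (h2.mul_right hr2).add_mul_left_right 1
  obtain ⟨e, f, he, hf, hE, hF⟩ :=
    Int.exists_sq_of_mul_eq_sq (by positivity) (by positivity) hcop h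
  have hef : IsCoprime e f := by rwa [hE, hF, IsCoprime.pow_iff two_pos two_pos] at hcop
  have he2 : e % 2 = 1 := by have := Int.sq_emod_eight e; omega
  obtain ⟨u, v, hu, hv, huv, rfl, rfl, he'⟩ := Int.exists_of_sq_add_four_mul_prime_mul_sq_eq_sq
    Int.prime_two two_pos he2 hr hf hef (by linear_combination hF - hE)
  refine ⟨u, v, hu, hv, huv, ?_, ?_, by linear_combination -hE - he'⟩
  · have := Int.sq_emod_eight e; have := Int.sq_emod_eight v
    have := Int.sq_emod_eight (v ^ 2 + 2 * u ^ 2); omega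
  · have hF2 : (v ^ 2 + 2 * u ^ 2) ^ 2 ≤ d ^ 2 := by
      rw [← h, hE, hF]; nlinarith [pow_pos he 2, pow_pos hf 2]
    exact (pow_le_pow_iff_left₀ hf.le hd.le two_ne_zero).mp hF2

theorem IsCoprime.sq_sub_sq_sq {R : Type*} [CommRing R] {u v : R} (h : IsCoprime u v) :
    IsCoprime (v ^ 2 - u ^ 2) (u ^ 2) := by
  simpa [sub_eq_add_neg] using
    ((IsCoprime.pow_iff two_pos two_pos).2 h.symm).add_mul_right_left (-1)

theorem exists_isPrimitiveSolution_of_three_dvd {u v s : ℤ} (hu : 0 < u) (hv : 0 < v)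
    (hs : s ≠ 0) (huv : IsCoprime u v) (hv2 : v % 2 = 1)
    (h : (v ^ 2 - u ^ 2) * (v ^ 2 - 4 * u ^ 2) = s ^ 2) (h3 : 3 ∣ v ^ 2 - u ^ 2) :
    ∃ a b c d, IsPrimitiveSolution a b c d ∧ d ^ 2 < v ^ 2 + 2 * u ^ 2 := by
  obtain ⟨G, hG⟩ := h3
  have hvu := huv.sq_sub_sq_sq
  rw [hG] at hvu
  obtain ⟨t, rfl⟩ : 3 ∣ s :=
    Int.prime_three.dvd_of_dvd_pow (n := 2) ⟨G * (v ^ 2 - 4 * u ^ 2), by rw [← h, hG]; ring⟩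
  have ht : G * (G - u ^ 2) = t ^ 2 :=
    mul_left_cancel₀ (by norm_num : (9 : ℤ) ≠ 0)
      (by linear_combination h - (v ^ 2 - 4 * u ^ 2 + 3 * G) * hG)
  have hGu : IsCoprime G (G - u ^ 2) := by
    simpa [sub_eq_add_neg, add_comm] using
      (hvu.of_isCoprime_of_dvd_left (dvd_mul_left G 3)).neg_right.add_mul_left_right 1
  obtain ⟨g, k, hg, hk, ⟨rfl, hk2⟩ | ⟨rfl, hk2⟩⟩ :=
    Int.exists_sq_or_neg_sq_of_mul_eq_sq hGu ht (by rintro rfl; simp at hs)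
  · -- `v² - 4u² = 3k²` is impossible modulo `4` for odd `v`
    have := Int.sq_emod_eight u; have := Int.sq_emod_eight v
    have := Int.sq_emod_eight g; have := Int.sq_emod_eight k; omega
  · have hvg : IsCoprime v (3 * g ^ 2 + v * v) := by
      rw [show 3 * g ^ 2 + v * v = u ^ 2 by linear_combination hG]
      exact huv.symm.pow_right
    replace hvg := (IsCoprime.add_mul_left_right_iff.mp hvg).of_isCoprime_of_dvd_right
      ((dvd_pow_self g two_ne_zero).mul_left 3)
    exact ⟨v, g, u, k, ⟨hv, hg, hu, hk, hvg, by linear_combination hG,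
      by linear_combination hG - hk2⟩, by nlinarith⟩

theorem exists_isPrimitiveSolution_of_not_three_dvd {u v s : ℤ} (hu : 0 < u) (hv : 0 < v)
    (hs : s ≠ 0) (huv : IsCoprime u v) (hv2 : v % 2 = 1)
    (h : (v ^ 2 - u ^ 2) * (v ^ 2 - 4 * u ^ 2) = s ^ 2) (h3 : ¬ 3 ∣ v ^ 2 - u ^ 2) :
    ∃ a b c d, IsPrimitiveSolution a b c d ∧ d ^ 2 < v ^ 2 + 2 * u ^ 2 := by
  have hGH : IsCoprime (v ^ 2 - u ^ 2) (v ^ 2 - 4 * u ^ 2) := by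
    have := ((Int.prime_three.coprime_iff_not_dvd.2 h3).symm.mul_right huv.sq_sub_sq_sq).neg_right
    rw [← IsCoprime.add_mul_left_right_iff (z := 1)] at this
    rwa [show -(3 * u ^ 2) + (v ^ 2 - u ^ 2) * 1 = v ^ 2 - 4 * u ^ 2 by ring] at this
  obtain ⟨g, k, hg, hk, ⟨hg2, hk2⟩ | ⟨-, hk2⟩⟩ := Int.exists_sq_or_neg_sq_of_mul_eq_sq hGH h hs
  · have hku : IsCoprime u (v ^ 2 + u * (-4 * u)) := huv.pow_right.add_mul_left_right _
    rw [show v ^ 2 + u * (-4 * u) = k ^ 2 by linear_combination hk2,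
      IsCoprime.pow_right_iff two_pos] at hku
    exact ⟨k, u, g, v, ⟨hk, hu, hg, hv, hku.symm, by linear_combination hg2 - hk2,
      by linear_combination -hk2⟩, by nlinarith⟩
  · -- `4u² - v² = k²` is impossible modulo `4` for odd `v`
    have := Int.sq_emod_eight u; have := Int.sq_emod_eight v; have := Int.sq_emod_eight k
    omega

theorem exists_isPrimitiveSolution_of_mul_eq_sq {u v s : ℤ} (hu : 0 < u) (hv : 0 < v)
    (hs : s ≠ 0) (huv : IsCoprime u v) (hv2 : v % 2 = 1)
    (h : (v ^ 2 - u ^ 2) * (v ^ 2 - 4 * u ^ 2) = s ^ 2) :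
    ∃ a b c d, IsPrimitiveSolution a b c d ∧ d ^ 2 < v ^ 2 + 2 * u ^ 2 := by
  by_cases h3 : 3 ∣ v ^ 2 - u ^ 2
  · exact exists_isPrimitiveSolution_of_three_dvd hu hv hs huv hv2 h h3
  · exact exists_isPrimitiveSolution_of_not_three_dvd hu hv hs huv hv2 h h3

theorem IsPrimitiveSolution.exists_lt {a b c d : ℤ} (h : IsPrimitiveSolution a b c d) :
    ∃ a' b' c' d', IsPrimitiveSolution a' b' c' d' ∧ d' < d := by
  obtain ⟨ha2, hb2⟩ := h.parity
  obtain ⟨B, rfl⟩ : ∃ B, b = 2 * B := ⟨b / 2, by omega⟩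
  obtain ⟨r, s, hr, hs, hrs, rfl, -, ha⟩ :=
    Int.exists_of_sq_add_four_mul_prime_mul_sq_eq_sq (y := B) Int.prime_three three_pos ha2
      (by linarith [h.b_pos]) h.c_pos
      (Int.isCoprime_of_sq_add_three_mul_sq_eq_sq h.isCoprime h.sq_add_three_mul_sq)
      (by linear_combination h.sq_add_three_mul_sq)
  have hrs2 : (r + s) % 2 = 1 := by
    have := Int.sq_emod_eight a; have := Int.sq_emod_eight (s ^ 2 - 3 * r ^ 2)
    have := Int.sq_emod_eight r; have := Int.sq_emod_eight s
    omega
  obtain ⟨u, v, hu, hv, huv, hv2, hvd, huvs⟩ := exists_of_sq_add_sq_mul_sq_add_nine_mul_sq_eq_sq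
    hr h.d_pos hrs hrs2 (by linear_combination h.sq_add_four_mul_sq - ha)
  obtain ⟨a', b', c', d', h', hd'⟩ :=
    exists_isPrimitiveSolution_of_mul_eq_sq hu hv hs.ne' huv hv2 huvs
  exact ⟨a', b', c', d', h', by nlinarith [h'.d_pos]⟩

theorem not_isPrimitiveSolution (a b c d : ℤ) : ¬ IsPrimitiveSolution a b c d := by
  induction hn : d.toNat using Nat.strong_induction_on generalizing a b c d with
  | _ n ih =>
    intro h
    obtain ⟨a', b', c', d', h', hd'⟩ := h.exists_lt
    exact ih d'.toNat (by have := h.d_pos; omega) a' b' c' d' rfl h'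

theorem no_simultaneous_squares :
    ¬ ∃ a b c d : ℕ, 0 < a ∧ 0 < b ∧ 0 < c ∧ 0 < d ∧ Nat.Coprime a b ∧
      a ^ 2 + 3 * b ^ 2 = c ^ 2 ∧ a ^ 2 + 4 * b ^ 2 = d ^ 2 := by
  rintro ⟨a, b, c, d, ha, hb, hc, hd, hab, h3, h4⟩
  exact not_isPrimitiveSolution a b c d ⟨by exact_mod_cast ha, by exact_mod_cast hb,
    by exact_mod_cast hc, by exact_mod_cast hd, Nat.isCoprime_iff_coprime.mpr hab,
    by exact_mod_cast h3, by exact_mod_cast h4⟩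
end

section
/- There do not exist coprime positive integers m, n and a positive integer h such that h^2 = m^4 - 5m^2n^2 + 4n^4 with m^2 > 2n^2 and h > 0. -/
/-!
Since `m⁴ - 5m²n² + 4n⁴ = (m² - n²)(m² - 4n²)` and the gcd of the two factors divides `3`, both
factors are squares, or both are three times squares. The Pythagorean parametrisation then turns a
solution into a coprime solution of `x⁴ + x²y² + y⁴ = w²` with `x, y < m`. Conversely, the coprime
factors `x² ± xy + y²` of `x⁴ + x²y² + y⁴` are squares `(a ± b)²`, so `ab = x (y / 2)` and
`a² + b² = x² + y²`; splitting `a, b, x, y / 2` into products of four numbers gives a new solution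
of the key equation with `m ≤ max x y`. Infinite descent on `m` concludes.
-/

lemma IsCoprime.sub_mul_sq {R : Type*} [CommRing R] {x k n : R} (hk : IsCoprime x k)
    (hn : IsCoprime x n) : IsCoprime x (x - k * n ^ 2) := by
  simpa [sub_eq_add_neg, add_comm] using (hk.mul_right hn.pow_right).neg_right.add_mul_left_right 1

lemma IsCoprime.sq_sub_mul_sq {R : Type*} [CommRing R] {m n : R} (h : IsCoprime m n) (k : R) :
    IsCoprime (m ^ 2 - k * n ^ 2) n := by
  rw [show m ^ 2 - k * n ^ 2 = m ^ 2 + n * (-(k * n)) by ring]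
  exact h.pow_left.add_mul_left_left _

namespace Int

lemma abs_le_sq (a : ℤ) : |a| ≤ a ^ 2 := by
  simpa using natAbs_le_self_sq a

lemma sq_emod_four (a : ℤ) : a ^ 2 % 4 = 0 ∨ a ^ 2 % 4 = 1 := by
  rcases even_or_odd a with h | h
  · have := pow_dvd_pow_of_dvd h.two_dvd 2
    omega
  · exact Or.inr (sq_mod_four_eq_one_of_odd h)

lemma odd_of_odd_sq {a : ℤ} (h : Odd (a ^ 2)) : Odd a :=
  (odd_pow.mp h).resolve_right two_ne_zero

lemma isCoprime_two_left_of_odd {a : ℤ} (h : Odd a) : IsCoprime 2 a :=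
  prime_two.coprime_iff_not_dvd.mpr (by rwa [← even_iff_two_dvd, not_even_iff_odd])

lemma not_even_and_even_of_isCoprime {x y : ℤ} (h : IsCoprime x y) : ¬ (Even x ∧ Even y) := by
  rintro ⟨hx, hy⟩
  simpa [isUnit_iff] using h.isUnit_of_dvd' hx.two_dvd hy.two_dvd

lemma exists_sq_of_isCoprime_of_pos {a b c : ℤ} (hab : IsCoprime a b) (ha : 0 < a)
    (h : a * b = c ^ 2) : ∃ s, 0 < s ∧ a = s ^ 2 := by
  obtain ⟨s, rfl | rfl⟩ := sq_of_isCoprime hab h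
  · exact ⟨|s|, abs_pos.mpr (by rintro rfl; simp at ha), (sq_abs s).symm⟩
  · nlinarith [sq_nonneg s]

lemma exists_sq_of_sq_mul_eq_sq {d n m : ℤ} (hd : d ≠ 0) (h : d ^ 2 * n = m ^ 2) :
    ∃ e, n = e ^ 2 := by
  obtain ⟨e, rfl⟩ := (pow_dvd_pow_iff two_ne_zero).mp ⟨n, h.symm⟩
  exact ⟨e, mul_left_cancel₀ (pow_ne_zero 2 hd) (by rw [h]; ring)⟩

lemma exists_eq_mul_of_mul_eq_mul {a b c d : ℤ} (ha : 0 < a) (hc : 0 < c) (hd : 0 < d)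
    (h : a * b = c * d) :
    ∃ p q r s : ℤ, 0 < p ∧ 0 < q ∧ 0 < r ∧ 0 < s ∧ a = p * q ∧ b = r * s ∧ c = p * r ∧
      d = q * s := by
  obtain ⟨p, q, ⟨r, hc'⟩, ⟨s, hd'⟩, ha'⟩ := exists_dvd_and_dvd_of_dvd_mul (Dvd.intro b h)
  have hb' : b = r * s := mul_left_cancel₀ ha.ne' (by rw [h, hc', hd', ha']; ring)
  wlog hp : 0 < p generalizing p q r s
  · have hp0 : p ≠ 0 := left_ne_zero_of_mul (ha' ▸ ha.ne')
    exact this (-p) (-q) (-r) (by rw [hc']; ring) (by rw [ha']; ring) (-s) (by rw [hd']; ring)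
      (by rw [hb']; ring) (by omega)
  have hq : 0 < q := pos_of_mul_pos_right (ha' ▸ ha) hp.le
  have hr : 0 < r := pos_of_mul_pos_right (hc' ▸ hc) hp.le
  have hs : 0 < s := pos_of_mul_pos_right (hd' ▸ hd) hq.le
  exact ⟨p, q, r, s, hp, hq, hr, hs, ha', hb', hc', hd'⟩

lemma odd_sq_add_mul_add_sq {x y : ℤ} (h : IsCoprime x y) : Odd (x ^ 2 + x * y + y ^ 2) := by
  have := not_even_and_even_of_isCoprime h
  rw [← not_even_iff_odd]
  simp only [parity_simps]
  tauto

lemma isCoprime_sq_add_mul_add_sq_sq_sub_mul_add_sq {x y : ℤ} (h : IsCoprime x y) :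
    IsCoprime (x ^ 2 + x * y + y ^ 2) (x ^ 2 - x * y + y ^ 2) := by
  have hSx : IsCoprime (x ^ 2 + x * y + y ^ 2) x := by
    rw [show x ^ 2 + x * y + y ^ 2 = y ^ 2 + x * (x + y) by ring]
    exact h.symm.pow_left.add_mul_left_left _
  have hSy : IsCoprime (x ^ 2 + x * y + y ^ 2) y := by
    rw [show x ^ 2 + x * y + y ^ 2 = x ^ 2 + y * (x + y) by ring]
    exact h.pow_left.add_mul_left_left _
  have hS2 := (isCoprime_two_left_of_odd (odd_sq_add_mul_add_sq h)).symm
  rw [show x ^ 2 - x * y + y ^ 2 = -(2 * x * y) + (x ^ 2 + x * y + y ^ 2) * 1 by ring]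
  exact ((hS2.mul_right hSx).mul_right hSy).neg_right.add_mul_left_right 1

end Int

structure KeySolution (m n h : ℤ) : Prop where
  m_pos : 0 < m
  n_pos : 0 < n
  h_pos : 0 < h
  coprime : IsCoprime m n
  lt : 2 * n ^ 2 < m ^ 2
  eq : h ^ 2 = m ^ 4 - 5 * m ^ 2 * n ^ 2 + 4 * n ^ 4

structure QuarticSolution_s18 (x y w : ℤ) : Prop where
  x_pos : 0 < x
  y_pos : 0 < y
  coprime : IsCoprime x y
  eq : x ^ 4 + x ^ 2 * y ^ 2 + y ^ 4 = w ^ 2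

lemma keySolution_or_keySolution_of_sq_eq {m n h : ℤ} (hm : 0 < m) (hn : 0 < n)
    (hmn : IsCoprime m n) (hmo : Odd m) (hh : h ≠ 0)
    (heq : h ^ 2 = m ^ 4 - 5 * m ^ 2 * n ^ 2 + 4 * n ^ 4) :
    KeySolution m n |h| ∨ KeySolution (2 * n) m (2 * |h|) := by
  have hpos : 0 < (m ^ 2 - n ^ 2) * (m ^ 2 - 4 * n ^ 2) := by
    rw [show (m ^ 2 - n ^ 2) * (m ^ 2 - 4 * n ^ 2) = h ^ 2 by rw [heq]; ring]
    positivity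
  rcases mul_pos_iff.mp hpos with ⟨-, hB⟩ | ⟨hA, -⟩
  · exact Or.inl ⟨hm, hn, abs_pos.mpr hh, hmn, by nlinarith, by rw [sq_abs, heq]⟩
  -- Both factors negative: `(2n)⁴ - 5 (2n)² m² + 4 m⁴ = 4 (m⁴ - 5 m² n² + 4 n⁴)` restores the sign.
  · refine Or.inr ⟨by positivity, hm, by positivity, ?_, by nlinarith, ?_⟩
    · exact (Int.isCoprime_two_left_of_odd hmo).mul_left hmn.symm
    · rw [mul_pow, sq_abs, heq]
      ring

lemma exists_keySolution_of_mul_eq_mul {a b x c : ℤ} (ha : 0 < a) (hx : 0 < x) (hc : 0 < c)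
    (hxo : Odd x) (hxc : IsCoprime x c) (hmul : a * b = x * c)
    (hsq : a ^ 2 + b ^ 2 = x ^ 2 + 4 * c ^ 2) :
    ∃ m n h, KeySolution m n h ∧ m ≤ max x (2 * c) := by
  obtain ⟨p, q, r, s, hp, hq, hr, hs, rfl, rfl, rfl, rfl⟩ :=
    Int.exists_eq_mul_of_mul_eq_mul ha hx hc hmul
  have hps : IsCoprime p s := hxc.of_mul_left_left.of_mul_right_right
  have hpo : Odd p := Int.Odd.of_mul_left hxo
  -- `hsq` reads `q² (p² - 4s²) = r² (p² - s²)`; multiply it by `p² - 4s²`.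
  have hfactor :
      r ^ 2 * (p ^ 4 - 5 * p ^ 2 * s ^ 2 + 4 * s ^ 4) = (q * (p ^ 2 - 4 * s ^ 2)) ^ 2 := by
    linear_combination (4 * s ^ 2 - p ^ 2) * hsq
  obtain ⟨e, he⟩ := Int.exists_sq_of_sq_mul_eq_sq hr.ne' hfactor
  have he0 : e ≠ 0 := by
    rintro rfl
    have hodd : Odd (p ^ 2 - 4 * s ^ 2) := hpo.pow.sub_even ⟨2 * s ^ 2, by ring⟩
    have : q * (p ^ 2 - 4 * s ^ 2) = 0 := by
      simpa [he] using hfactor.symm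
    obtain ⟨k, hk⟩ := hodd
    rcases mul_eq_zero.mp this with h0 | h0 <;> omega
  rcases keySolution_or_keySolution_of_sq_eq hp hs hps hpo he0 he.symm with h1 | h2
  · exact ⟨_, _, _, h1, le_max_of_le_left (le_mul_of_one_le_right hp.le hr)⟩
  · exact ⟨_, _, _, h2, le_max_of_le_right (by nlinarith)⟩

namespace QuarticSolution_s18

variable {x y w : ℤ}

lemma of_ne_zero (hx : x ≠ 0) (hy : y ≠ 0) (hxy : IsCoprime x y)
    (h : x ^ 4 + x ^ 2 * y ^ 2 + y ^ 4 = w ^ 2) : QuarticSolution_s18 |x| |y| w := by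
  refine ⟨abs_pos.mpr hx, abs_pos.mpr hy, hxy.abs_abs, ?_⟩
  rw [← h, (by norm_num : Even 4).pow_abs, (by norm_num : Even 4).pow_abs, sq_abs, sq_abs]

lemma swap (hs : QuarticSolution_s18 x y w) : QuarticSolution_s18 y x w :=
  ⟨hs.y_pos, hs.x_pos, hs.coprime.symm, by linear_combination hs.eq⟩

lemma even_or_even (hs : QuarticSolution_s18 x y w) : Even x ∨ Even y := by
  by_contra! hodd
  rw [Int.not_even_iff_odd, Int.not_even_iff_odd] at hodd
  have hx := Int.sq_mod_four_eq_one_of_odd (hodd.1.pow : Odd (x ^ 2))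
  have hxy := Int.sq_mod_four_eq_one_of_odd (hodd.1.mul hodd.2)
  have hy := Int.sq_mod_four_eq_one_of_odd (hodd.2.pow : Odd (y ^ 2))
  have hw := Int.sq_emod_four w
  have : (x ^ 2) ^ 2 + (x * y) ^ 2 + (y ^ 2) ^ 2 = w ^ 2 := by linear_combination hs.eq
  omega

lemma exists_keySolution_of_even (hs : QuarticSolution_s18 x y w) (hy : Even y) :
    ∃ m n h, KeySolution m n h ∧ m ≤ max x y := by
  obtain ⟨hx, hy0, hxy, heq⟩ := hs
  have hxo : Odd x :=
    Int.not_even_iff_odd.mp fun hx => Int.not_even_and_even_of_isCoprime hxy ⟨hx, hy⟩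
  obtain ⟨c, rfl⟩ : ∃ c, y = 2 * c := ⟨y / 2, by obtain ⟨k, hk⟩ := hy; omega⟩
  have hST := Int.isCoprime_sq_add_mul_add_sq_sq_sub_mul_add_sq hxy
  have hS : 0 < x ^ 2 + x * (2 * c) + (2 * c) ^ 2 := by nlinarith
  have hT : 0 < x ^ 2 - x * (2 * c) + (2 * c) ^ 2 := by nlinarith
  obtain ⟨s, hs, hs2⟩ := Int.exists_sq_of_isCoprime_of_pos hST hS (by rw [← heq]; ring)
  obtain ⟨t, ht, ht2⟩ := Int.exists_sq_of_isCoprime_of_pos hST.symm hT (by rw [← heq]; ring)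
  have hso : Odd s := Int.odd_of_odd_sq (hs2 ▸ Int.odd_sq_add_mul_add_sq hxy)
  have hto : Odd t := Int.odd_of_odd_sq <| by
    rw [← ht2, show x ^ 2 - x * (2 * c) + (2 * c) ^ 2 = s ^ 2 - 2 * (2 * x * c) by rw [← hs2]; ring]
    exact hso.pow.sub_even (even_two_mul _)
  obtain ⟨a, b, rfl, rfl⟩ : ∃ a b, s = a + b ∧ t = a - b := by
    obtain ⟨k, rfl⟩ := hso
    obtain ⟨l, rfl⟩ := hto
    exact ⟨k + l + 1, k - l, by ring, by ring⟩
  have hmul : a * b = x * c := by linarith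
  have hsq : a ^ 2 + b ^ 2 = x ^ 2 + 4 * c ^ 2 := by linarith
  exact exists_keySolution_of_mul_eq_mul (by linarith) hx (by linarith) hxo
    hxy.of_mul_right_right hmul hsq

lemma exists_keySolution (hs : QuarticSolution_s18 x y w) :
    ∃ m n h, KeySolution m n h ∧ m ≤ max x y := by
  rcases hs.even_or_even with hx | hy
  · rw [max_comm]
    exact hs.swap.exists_keySolution_of_even hx
  · exact hs.exists_keySolution_of_even hy

end QuarticSolution_s18

lemma exists_quarticSolution_of_eq_sq {m n u v : ℤ} (hm : 0 < m) (hn : 0 < n)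
    (hmn : IsCoprime m n) (hu : m ^ 2 - n ^ 2 = u ^ 2) (hv : m ^ 2 - 4 * n ^ 2 = v ^ 2) :
    ∃ x y w, QuarticSolution_s18 x y w ∧ x < m ∧ y < m := by
  have hmo : Odd m := by
    rw [← Int.not_even_iff_odd]
    intro hme
    have hno : Odd n := Int.not_even_iff_odd.mp fun hne =>
      Int.not_even_and_even_of_isCoprime hmn ⟨hme, hne⟩
    have := pow_dvd_pow_of_dvd hme.two_dvd 2
    have := Int.sq_mod_four_eq_one_of_odd hno
    have := Int.sq_emod_four u
    omega
  have hvo : Odd v := Int.odd_of_odd_sq (hv ▸ hmo.pow.sub_even ⟨2 * n ^ 2, by ring⟩)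
  have hvn : IsCoprime v n := by
    rw [← IsCoprime.pow_left_iff two_pos, ← hv]
    exact hmn.sq_sub_mul_sq 4
  obtain ⟨p, q, -, hnpq, hmpq, hpq, -, -⟩ := PythagoreanTriple.coprime_classification'
    (x := v) (y := 2 * n) (z := m) (by unfold PythagoreanTriple; linear_combination -hv)
    (Int.isCoprime_iff_gcd_eq_one.mp ((Int.isCoprime_two_left_of_odd hvo).symm.mul_right hvn))
    (Int.odd_iff.mp hvo) hm
  have hn' : n = p * q := by linarith
  have hp : p ≠ 0 := by rintro rfl; simp at hn'; omega
  have hq : q ≠ 0 := by rintro rfl; simp at hn'; omega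
  have hlt : ∀ a b : ℤ, b ≠ 0 → m = a ^ 2 + b ^ 2 → |a| < m := fun a b hb hm' => by
    linarith [Int.abs_le_sq a, (by positivity : 0 < b ^ 2)]
  exact ⟨|p|, |q|, u, .of_ne_zero hp hq (Int.isCoprime_iff_gcd_eq_one.mpr hpq)
    (by rw [← hu, hmpq, hn']; ring), hlt p q hq hmpq, hlt q p hp (by rw [hmpq]; ring)⟩

lemma exists_quarticSolution_of_eq_three_mul_sq {m n u v : ℤ} (hm : 0 < m) (hmn : IsCoprime m n)
    (hu0 : 0 < u) (hv0 : v ≠ 0) (hu : m ^ 2 - n ^ 2 = 3 * u ^ 2)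
    (hv : m ^ 2 - 4 * n ^ 2 = 3 * v ^ 2) :
    ∃ x y w, QuarticSolution_s18 x y w ∧ x < m ∧ y < m := by
  have hno : Odd n := by
    rw [← Int.not_even_iff_odd]
    intro hne
    have hmo : Odd m := Int.not_even_iff_odd.mp fun hme =>
      Int.not_even_and_even_of_isCoprime hmn ⟨hme, hne⟩
    have := pow_dvd_pow_of_dvd hne.two_dvd 2
    have := Int.sq_mod_four_eq_one_of_odd hmo
    have := Int.sq_emod_four u
    omega
  have hnv : IsCoprime n v := by
    have : IsCoprime (3 * v ^ 2) n := hv ▸ hmn.sq_sub_mul_sq 4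
    exact ((IsCoprime.pow_left_iff two_pos).mp this.of_mul_left_right).symm
  obtain ⟨p, q, rfl, hvpq, rfl, hpq, -, -⟩ := PythagoreanTriple.coprime_classification'
    (x := n) (y := v) (z := u) (by unfold PythagoreanTriple; linarith)
    (Int.isCoprime_iff_gcd_eq_one.mp hnv) (Int.odd_iff.mp hno) hu0
  have hp : p ≠ 0 := by rintro rfl; simp at hvpq; omega
  have hq : q ≠ 0 := by rintro rfl; simp at hvpq; omega
  have hm2 : 2 ^ 2 * (p ^ 4 + p ^ 2 * q ^ 2 + q ^ 4) = m ^ 2 := by linear_combination -hu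
  obtain ⟨w, hw⟩ := Int.exists_sq_of_sq_mul_eq_sq two_ne_zero hm2
  have hlt : ∀ a b : ℤ, b ≠ 0 → 2 ^ 2 * (a ^ 4 + a ^ 2 * b ^ 2 + b ^ 4) = m ^ 2 → |a| < m :=
    fun a b hb hm' => by
      have : 2 * a ^ 2 < m := lt_of_pow_lt_pow_left₀ 2 hm.le (by
        rw [← hm']; nlinarith [(by positivity : 0 < b ^ 4), sq_nonneg (a * b)])
      linarith [Int.abs_le_sq a, sq_nonneg a]
  exact ⟨|p|, |q|, w, .of_ne_zero hp hq (Int.isCoprime_iff_gcd_eq_one.mpr hpq) hw,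
    hlt p q hq hm2, hlt q p hp (by rw [← hm2]; ring)⟩

lemma KeySolution.exists_quarticSolution {m n h : ℤ} (hs : KeySolution m n h) :
    ∃ x y w, QuarticSolution_s18 x y w ∧ x < m ∧ y < m := by
  obtain ⟨hm, hn, hh, hmn, hlt, heq⟩ := hs
  have hAB : (m ^ 2 - n ^ 2) * (m ^ 2 - 4 * n ^ 2) = h ^ 2 := by rw [heq]; ring
  have hA : 0 < m ^ 2 - n ^ 2 := by nlinarith
  have hB : 0 < m ^ 2 - 4 * n ^ 2 := pos_of_mul_pos_right (hAB ▸ pow_pos hh 2) hA.le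
  have hAn : IsCoprime (m ^ 2 - n ^ 2) n := by simpa using hmn.sq_sub_mul_sq 1
  by_cases h3 : (3 : ℤ) ∣ m ^ 2 - n ^ 2
  · obtain ⟨a, ha⟩ := h3
    have hb : m ^ 2 - 4 * n ^ 2 = 3 * (a - n ^ 2) := by linarith
    have hab : IsCoprime a (a - n ^ 2) := by
      simpa using (isCoprime_one_right : IsCoprime a 1).sub_mul_sq (ha ▸ hAn).of_mul_left_right
    obtain ⟨k, rfl⟩ : 3 ∣ h :=
      Int.prime_three.dvd_of_dvd_pow ⟨3 * (a * (a - n ^ 2)), by rw [← hAB, ha, hb]; ring⟩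
    have hk : a * (a - n ^ 2) = k ^ 2 := by
      rw [ha, hb] at hAB
      linarith
    obtain ⟨u, hu, rfl⟩ := Int.exists_sq_of_isCoprime_of_pos hab (by linarith) hk
    obtain ⟨v, hv, hv'⟩ := Int.exists_sq_of_isCoprime_of_pos hab.symm (by linarith)
      (by rw [mul_comm, hk])
    exact exists_quarticSolution_of_eq_three_mul_sq hm hmn hu hv.ne' ha (by rw [hb, hv'])
  · have hAB' : IsCoprime (m ^ 2 - n ^ 2) (m ^ 2 - 4 * n ^ 2) := by
      rw [show m ^ 2 - 4 * n ^ 2 = m ^ 2 - n ^ 2 - 3 * n ^ 2 by ring]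
      exact (Int.prime_three.coprime_iff_not_dvd.mpr h3).symm.sub_mul_sq hAn
    obtain ⟨u, -, hu⟩ := Int.exists_sq_of_isCoprime_of_pos hAB' hA hAB
    obtain ⟨v, -, hv⟩ := Int.exists_sq_of_isCoprime_of_pos hAB'.symm hB (by rw [mul_comm, hAB])
    exact exists_quarticSolution_of_eq_sq hm hn hmn hu hv

theorem not_keySolution (m n h : ℤ) : ¬ KeySolution m n h := by
  intro hs
  obtain ⟨x, y, w, hq, hxm, hym⟩ := hs.exists_quarticSolution
  obtain ⟨m', n', h', hs', hm'⟩ := hq.exists_keySolution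
  have : m' < m := hm'.trans_lt (max_lt hxm hym)
  have := hs'.m_pos
  exact not_keySolution m' n' h' hs'
termination_by m.toNat
decreasing_by omega

theorem no_solution_key_equation :
    ¬ ∃ m n h : ℤ, 0 < m ∧ 0 < n ∧ 0 < h ∧ IsCoprime m n ∧ 2 * n ^ 2 < m ^ 2 ∧
      h ^ 2 = m ^ 4 - 5 * m ^ 2 * n ^ 2 + 4 * n ^ 4 := by
  rintro ⟨m, n, h, hm, hn, hh, hmn, hlt, heq⟩
  exact not_keySolution m n h ⟨hm, hn, hh, hmn, hlt, heq⟩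
end
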